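/- arXiv:1506.08613 — 12 statements merged into one kernel-verified Lean document; each statement's English description precedes it below -/
import Mathlib

section
/- Let ω, m > 0, let I ⊆ ℝ be an open interval, and let V, U : I → ℝ be twice continuously differentiable. Define on ℝ × I the Hamiltonian H(p,q) = p²/(2m) + V(q) and the complexifier C(p,q) = p²/(2mω) + U(q). Suppose there exist functions f, g : I → ℝ and constants β₀, β₁ ∈ ℝ such that for all (p,q) ∈ ℝ × I: {C,H}(p,q) = p·f(q), H(p,q) − (1/2)·{C,H}_{(2)}(p,q) = g(q), and {C,H}_{(2)}(p,q) = β₁·C(p,q) + β₀. Then β₁ = 2ω and there exists α ∈ ℝ such that for all q ∈ I: f(q) = ωq + α, (ωq + α)·U'(q) = −2ω·U(q) − β₀, and V'(q) = mω·(ωq + α) + ω·U'(q). In particular, on any subinterval of I on which ωq + α ≠ 0 there exist constants λ, c ∈ ℝ with U(q) = (λ/ω)·(q + α/ω)⁻² − β₀/(2ω) and V(q) = (mω²/2)·(q + α/ω)² + λ·(q + α/ω)⁻² + c, i.e. the system is the radial oscillator. -/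
/-- Poisson bracket on ℝ² with canonical coordinates (p,q):
`{f,g} = (∂f/∂p)(∂g/∂q) − (∂f/∂q)(∂g/∂p)`. -/
noncomputable def poissonBracket (f g : ℝ → ℝ → ℝ) : ℝ → ℝ → ℝ := fun p q =>
  deriv (fun p' => f p' q) p * deriv (fun q' => g p q') q -
  deriv (fun q' => f p q') q * deriv (fun p' => g p' q) p

/-- Iterated Poisson bracket: `{f,g}_{(0)} = g`, `{f,g}_{(n+1)} = {f,{f,g}_{(n)}}`. -/
noncomputable def poissonBracketIter (f g : ℝ → ℝ → ℝ) : ℕ → ℝ → ℝ → ℝ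
  | 0 => g
  | n + 1 => poissonBracket f (poissonBracketIter f g n)

private lemma const_of_hasDerivAt_zero {s : Set ℝ} (hs : Convex ℝ s) {φ : ℝ → ℝ}
    (h : ∀ x ∈ s, HasDerivAt φ 0 x) {x y : ℝ} (hx : x ∈ s) (hy : y ∈ s) : φ x = φ y := by
  have hb := hs.norm_image_sub_le_of_norm_hasDerivWithin_le (f' := fun _ => (0 : ℝ)) (C := 0)
    (fun z hz => (h z hz).hasDerivWithinAt) (fun z _ => by simp) hx hy
  have h0 : ‖φ y - φ x‖ ≤ 0 := by simpa using hb
  have := norm_le_zero_iff.1 h0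
  linarith [sub_eq_zero.1 this]

set_option maxHeartbeats 1000000 in
theorem stability_conditions_force_radial_oscillator
    (ω m : ℝ) (hω : 0 < ω) (hm : 0 < m) (a b : ℝ) (hab : a < b)
    (V U : ℝ → ℝ)
    (hV : ContDiffOn ℝ 2 V (Set.Ioo a b))
    (hU : ContDiffOn ℝ 2 U (Set.Ioo a b))
    (H C : ℝ → ℝ → ℝ)
    (hH : ∀ p q : ℝ, H p q = p ^ 2 / (2 * m) + V q)
    (hC : ∀ p q : ℝ, C p q = p ^ 2 / (2 * m * ω) + U q)
    (f g : ℝ → ℝ) (β₀ β₁ : ℝ)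
    (h1 : ∀ p : ℝ, ∀ q ∈ Set.Ioo a b, poissonBracket C H p q = p * f q)
    (h2 : ∀ p : ℝ, ∀ q ∈ Set.Ioo a b,
      H p q - (1 / 2) * poissonBracketIter C H 2 p q = g q)
    (h3 : ∀ p : ℝ, ∀ q ∈ Set.Ioo a b,
      poissonBracketIter C H 2 p q = β₁ * C p q + β₀) :
    β₁ = 2 * ω ∧
    ∃ α : ℝ,
      (∀ q ∈ Set.Ioo a b,
        f q = ω * q + α ∧
        (ω * q + α) * deriv U q = -2 * ω * U q - β₀ ∧
        deriv V q = m * ω * (ω * q + α) + ω * deriv U q) ∧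
      (∀ c d : ℝ, Set.Ioo c d ⊆ Set.Ioo a b →
        (∀ q ∈ Set.Ioo c d, ω * q + α ≠ 0) →
        ∃ lam cst : ℝ, ∀ q ∈ Set.Ioo c d,
          U q = lam / ω * ((q + α / ω) ^ 2)⁻¹ - β₀ / (2 * ω) ∧
          V q = m * ω ^ 2 / 2 * (q + α / ω) ^ 2 + lam * ((q + α / ω) ^ 2)⁻¹ + cst) := by
  have hm0 : m ≠ 0 := ne_of_gt hm
  have hω0 : ω ≠ 0 := ne_of_gt hω
  set G : ℝ → ℝ := fun q => deriv V q / (m * ω) - deriv U q / m with hGdef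
  -- basic partial derivatives
  have hCp : ∀ p q : ℝ, deriv (fun p' => C p' q) p = p / (m * ω) := by
    intro p q
    have he : (fun p' => C p' q) = fun p' => p' ^ 2 / (2 * m * ω) + U q :=
      funext fun p' => hC p' q
    rw [he, deriv_add_const, deriv_div_const, deriv_pow_field]
    field_simp; ring
  have hCq : ∀ p q : ℝ, deriv (fun q' => C p q') q = deriv U q := by
    intro p q
    have he : (fun q' => C p q') = fun q' => p ^ 2 / (2 * m * ω) + U q' :=
      funext fun q' => hC p q'
    rw [he, deriv_const_add]
  have hHp : ∀ p q : ℝ, deriv (fun p' => H p' q) p = p / m := by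
    intro p q
    have he : (fun p' => H p' q) = fun p' => p' ^ 2 / (2 * m) + V q :=
      funext fun p' => hH p' q
    rw [he, deriv_add_const, deriv_div_const, deriv_pow_field]
    field_simp; ring
  have hHq : ∀ p q : ℝ, deriv (fun q' => H p q') q = deriv V q := by
    intro p q
    have he : (fun q' => H p q') = fun q' => p ^ 2 / (2 * m) + V q' :=
      funext fun q' => hH p q'
    rw [he, deriv_const_add]
  -- first bracket
  have hPB : ∀ p q : ℝ, poissonBracket C H p q = p * G q := by
    intro p q
    rw [poissonBracket, hCp, hCq, hHp, hHq, hGdef]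
    ring
  -- second bracket
  have hPB2 : ∀ p q : ℝ,
      poissonBracketIter C H 2 p q = p ^ 2 / (m * ω) * deriv G q - deriv U q * G q := by
    intro p q
    have hK : poissonBracket C H = fun p q => p * G q :=
      funext fun p => funext fun q => hPB p q
    show poissonBracket C (poissonBracketIter C H 1) p q = _
    have h1' : poissonBracketIter C H 1 = poissonBracket C H := rfl
    rw [h1', hK, poissonBracket, hCp, hCq]
    have e1 : deriv (fun q' => p * G q') q = p * deriv G q := deriv_const_mul_field p
    have e2 : deriv (fun p' => p' * G q) p = G q := by simp [deriv_mul_const_field]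
    rw [e1, e2]; ring
  -- differentiability facts on the interval
  have hVd1 : ContDiffOn ℝ 1 (deriv V) (Set.Ioo a b) :=
    hV.deriv_of_isOpen isOpen_Ioo (by norm_num)
  have hUd1 : ContDiffOn ℝ 1 (deriv U) (Set.Ioo a b) :=
    hU.deriv_of_isOpen isOpen_Ioo (by norm_num)
  have hVd : ∀ q ∈ Set.Ioo a b, DifferentiableAt ℝ V q := fun q hq =>
    (hV.differentiableOn (by norm_num)).differentiableAt (isOpen_Ioo.mem_nhds hq)
  have hUd : ∀ q ∈ Set.Ioo a b, DifferentiableAt ℝ U q := fun q hq =>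
    (hU.differentiableOn (by norm_num)).differentiableAt (isOpen_Ioo.mem_nhds hq)
  have hdVd : ∀ q ∈ Set.Ioo a b, DifferentiableAt ℝ (deriv V) q := fun q hq =>
    (hVd1.differentiableOn (by norm_num)).differentiableAt (isOpen_Ioo.mem_nhds hq)
  have hdUd : ∀ q ∈ Set.Ioo a b, DifferentiableAt ℝ (deriv U) q := fun q hq =>
    (hUd1.differentiableOn (by norm_num)).differentiableAt (isOpen_Ioo.mem_nhds hq)
  have hGd : ∀ q ∈ Set.Ioo a b, DifferentiableAt ℝ G q := fun q hq =>
    ((hdVd q hq).div_const _).sub ((hdUd q hq).div_const _)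
  -- pointwise equations
  have eqf : ∀ q ∈ Set.Ioo a b, f q = G q := by
    intro q hq
    have := h1 1 q hq
    rw [hPB 1 q] at this
    linarith [this]
  have eq3 : ∀ q ∈ Set.Ioo a b, -(deriv U q * G q) = β₁ * U q + β₀ := by
    intro q hq
    have := h3 0 q hq
    rw [hPB2 0 q, hC 0 q] at this
    norm_num at this
    linarith [this]
  have eqdG : ∀ q ∈ Set.Ioo a b, deriv G q = ω := by
    intro q hq
    have hA := h2 0 q hq
    have hB := h2 1 q hq
    rw [hPB2 0 q, hH 0 q] at hA
    rw [hPB2 1 q, hH 1 q] at hB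
    norm_num at hA hB
    have key : ω⁻¹ * m⁻¹ * deriv G q = m⁻¹ := by linarith
    calc deriv G q = (m * ω) * (ω⁻¹ * m⁻¹ * deriv G q) := by field_simp
      _ = (m * ω) * m⁻¹ := by rw [key]
      _ = ω := by field_simp
  have eqβ : ∀ q ∈ Set.Ioo a b, deriv G q = β₁ / 2 := by
    intro q hq
    have hA := h3 0 q hq
    have hB := h3 1 q hq
    rw [hPB2 0 q, hC 0 q] at hA
    rw [hPB2 1 q, hC 1 q] at hB
    norm_num at hA hB
    have key : ω⁻¹ * m⁻¹ * deriv G q = β₁ * (ω⁻¹ * (m⁻¹ * (1 / 2))) := by linear_combination hB - hA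
    calc deriv G q = (m * ω) * (ω⁻¹ * m⁻¹ * deriv G q) := by field_simp
      _ = (m * ω) * (β₁ * (ω⁻¹ * (m⁻¹ * (1 / 2)))) := by rw [key]
      _ = β₁ / 2 := by field_simp
  -- midpoint
  have hq₀ : (a + b) / 2 ∈ Set.Ioo a b := ⟨by linarith, by linarith⟩
  have hβ₁ : β₁ = 2 * ω := by
    have h1 := eqdG _ hq₀
    have h2 := eqβ _ hq₀
    linarith
  refine ⟨hβ₁, ?_⟩
  have hGω : ∀ x ∈ Set.Ioo a b, HasDerivAt G ω x := by
    intro x hx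
    have h := (hGd x hx).hasDerivAt
    rwa [eqdG x hx] at h
  obtain ⟨α, hGlin⟩ : ∃ α : ℝ, ∀ q ∈ Set.Ioo a b, G q = ω * q + α := by
    refine ⟨G ((a + b) / 2) - ω * ((a + b) / 2), fun q hq => ?_⟩
    have hcon : (fun x => G x - ω * x) q = (fun x => G x - ω * x) ((a + b) / 2) := by
      apply const_of_hasDerivAt_zero (convex_Ioo a b) _ hq hq₀
      intro x hx
      have hlin : HasDerivAt (fun x : ℝ => ω * x) ω x := by
        simpa using (hasDerivAt_id x).const_mul ω
      exact ((hGω x hx).sub hlin).congr_deriv (sub_self ω)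
    simp only at hcon
    linarith
  have hrel : ∀ q ∈ Set.Ioo a b, (ω * q + α) * deriv U q = -2 * ω * U q - β₀ := by
    intro q hq
    have h := eq3 q hq
    rw [hGlin q hq, hβ₁] at h
    linear_combination -h
  have hV' : ∀ q ∈ Set.Ioo a b, deriv V q = m * ω * (ω * q + α) + ω * deriv U q := by
    intro q hq
    have h := hGlin q hq
    rw [hGdef] at h
    simp only at h
    field_simp at h
    have h2 : m * deriv V q = m * (m * ω * (ω * q + α) + ω * deriv U q) := by
      linear_combination m * h
    exact mul_left_cancel₀ hm0 h2
  refine ⟨α, fun q hq => ⟨by rw [eqf q hq]; exact hGlin q hq, hrel q hq, hV' q hq⟩, ?_⟩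
  intro c d hsub hne
  by_cases hcd : c < d
  · have hq₁ : (c + d) / 2 ∈ Set.Ioo c d := ⟨by linarith, by linarith⟩
    set q₁ := (c + d) / 2 with hq₁def
    have hconv : Convex ℝ (Set.Ioo c d) := convex_Ioo c d
    set Φ : ℝ → ℝ := fun q => (ω * q + α) ^ 2 * (U q + β₀ / (2 * ω)) with hΦdef
    have hΦ0 : ∀ q ∈ Set.Ioo c d, HasDerivAt Φ 0 q := by
      intro q hq
      have hqa := hsub hq
      have hsq : HasDerivAt (fun x => (ω * x + α) ^ 2) (2 * (ω * q + α) * ω) q := by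
        have h := (((hasDerivAt_id q).const_mul ω).add_const α).pow 2
        refine h.congr_deriv ?_
        norm_num [id]
      have hUq : HasDerivAt (fun x => U x + β₀ / (2 * ω)) (deriv U q) q :=
        ((hUd q hqa).hasDerivAt).add_const _
      have hD := hsq.mul hUq
      have h0 : 2 * (ω * q + α) * ω * (U q + β₀ / (2 * ω)) +
          (ω * q + α) ^ 2 * deriv U q = 0 := by
        have hr := hrel q hqa
        have h2ω : 2 * ω * (U q + β₀ / (2 * ω)) = 2 * ω * U q + β₀ := by
          field_simp
        linear_combination (ω * q + α) * hr + (ω * q + α) * h2ω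
      rw [h0] at hD
      exact hD
    have hΦconst : ∀ q ∈ Set.Ioo c d, Φ q = Φ q₁ := fun q hq =>
      const_of_hasDerivAt_zero hconv hΦ0 hq hq₁
    obtain ⟨K, hKc⟩ : ∃ K : ℝ, ∀ q ∈ Set.Ioo c d,
        (ω * q + α) ^ 2 * (U q + β₀ / (2 * ω)) = K :=
      ⟨Φ q₁, fun q hq => hΦconst q hq⟩
    have hUform : ∀ q ∈ Set.Ioo c d,
        U q = (K / ω) / ω * ((q + α / ω) ^ 2)⁻¹ - β₀ / (2 * ω) := by
      intro q hq
      have hz : ω * q + α ≠ 0 := hne q hq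
      have hfac : ω * q + α = ω * (q + α / ω) := by field_simp
      have hz' : q + α / ω ≠ 0 := by
        intro h
        rw [hfac, h, mul_zero] at hz
        exact hz rfl
      have hK := hKc q hq
      rw [hfac] at hK
      have hωt : ω * (q + α / ω) ≠ 0 := by rw [← hfac]; exact hz
      have h5 : U q + β₀ / (2 * ω) = K / (ω * (q + α / ω)) ^ 2 := by
        rw [eq_div_iff (pow_ne_zero 2 hωt)]
        linear_combination hK
      have hA : K / (ω * (q + α / ω)) ^ 2 = K / ω / ω * ((q + α / ω) ^ 2)⁻¹ := by
        rw [show (ω * (q + α / ω)) ^ 2 = ω * ω * (q + α / ω) ^ 2 by ring,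
          ← div_div, ← div_div, div_eq_mul_inv]
      linarith [h5, hA]
    have hdU3 : ∀ q ∈ Set.Ioo c d,
        (ω * q + α) ^ 3 * deriv U q = -2 * ω * K := by
      intro q hq
      have hqa := hsub hq
      have e1 := hrel q hqa
      have hKx := hKc q hq
      have hKx2 : 2 * ω * ((ω * q + α) ^ 2 * (U q + β₀ / (2 * ω))) = 2 * ω * K := by
        rw [hKx]
      have hcancel : 2 * ω * (β₀ / (2 * ω)) = β₀ := by field_simp
      linear_combination (ω * q + α) ^ 2 * e1 - hKx2 + (ω * q + α) ^ 2 * hcancel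
    have hΨ0 : ∀ q ∈ Set.Ioo c d, HasDerivAt
        (fun x => V x - (m * ω ^ 2 / 2 * (x + α / ω) ^ 2 + K / ω * ((x + α / ω) ^ 2)⁻¹))
        0 q := by
      intro q hq
      have hqa := hsub hq
      have hz : ω * q + α ≠ 0 := hne q hq
      have hfac : ω * q + α = ω * (q + α / ω) := by field_simp
      have hz' : q + α / ω ≠ 0 := by
        intro h
        rw [hfac, h, mul_zero] at hz
        exact hz rfl
      have h1' : HasDerivAt (fun x : ℝ => (x + α / ω) ^ 2) (2 * (q + α / ω)) q := by
        have h := ((hasDerivAt_id q).add_const (α / ω)).pow 2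
        refine h.congr_deriv ?_
        norm_num [id]
      have h2' : HasDerivAt (fun x : ℝ => ((x + α / ω) ^ 2)⁻¹)
          (-(2 * (q + α / ω)) / ((q + α / ω) ^ 2) ^ 2) q := h1'.inv (pow_ne_zero 2 hz')
      have hcand : HasDerivAt
          (fun x => m * ω ^ 2 / 2 * (x + α / ω) ^ 2 + K / ω * ((x + α / ω) ^ 2)⁻¹)
          (m * ω ^ 2 / 2 * (2 * (q + α / ω)) +
            K / ω * (-(2 * (q + α / ω)) / ((q + α / ω) ^ 2) ^ 2)) q :=
        (h1'.const_mul (m * ω ^ 2 / 2)).add (h2'.const_mul (K / ω))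
      have hVq : HasDerivAt V (deriv V q) q := (hVd q hqa).hasDerivAt
      have hD := hVq.sub hcand
      have h0 : deriv V q - (m * ω ^ 2 / 2 * (2 * (q + α / ω)) +
          K / ω * (-(2 * (q + α / ω)) / ((q + α / ω) ^ 2) ^ 2)) = 0 := by
        have e3 := hdU3 q hq
        have e4 := hV' q hqa
        rw [hfac] at e3 e4
        obtain ⟨t, ht⟩ : ∃ t : ℝ, q + α / ω = t := ⟨_, rfl⟩
        have htnz : t ≠ 0 := by rw [← ht]; exact hz'
        rw [ht] at e3 e4 ⊢
        have hdU : deriv U q = -2 * ω * K / (ω * t) ^ 3 := by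
          rw [eq_div_iff (pow_ne_zero 3 (mul_ne_zero hω0 htnz))]
          linear_combination e3
        rw [e4, hdU]
        field_simp
        ring
      rw [h0] at hD
      exact hD
    obtain ⟨cst, hcstc⟩ : ∃ cst : ℝ, ∀ q ∈ Set.Ioo c d,
        V q - (m * ω ^ 2 / 2 * (q + α / ω) ^ 2 + K / ω * ((q + α / ω) ^ 2)⁻¹) = cst :=
      ⟨V q₁ - (m * ω ^ 2 / 2 * (q₁ + α / ω) ^ 2 + K / ω * ((q₁ + α / ω) ^ 2)⁻¹),
        fun q hq => const_of_hasDerivAt_zero hconv hΨ0 hq hq₁⟩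
    exact ⟨K / ω, cst, fun q hq => ⟨hUform q hq, by linarith [hcstc q hq]⟩⟩
  · refine ⟨0, 0, fun q hq => ?_⟩
    rw [Set.Ioo_eq_empty hcd] at hq
    exact absurd hq (Set.notMem_empty q)
end

section
/- Let m, ω > 0 and λ ∈ ℝ. On {(p,q) ∈ ℝ² : q ≠ 0} define the radial-oscillator Hamiltonian H(p,q) = p²/(2m) + (m/2)ω²q² + λ·q⁻² and the complexifier C(p,q) = p²/(2mω) + (λ/ω)·q⁻². Then for all (p,q) with q ≠ 0: {C,H}(p,q) = ω·p·q, {C,H}_{(2)}(p,q) = 2ω·C(p,q), {C,H}_{(3)}(p,q) = 0, and H(p,q) − (1/2)·{C,H}_{(2)}(p,q) = (m/2)ω²q². In particular the radial oscillator satisfies the stability conditions {C,H} = p·f(q), H − (1/2){C,H}_{(2)} = g(q) and {C,H}_{(2)} = β₁C + β₀ with f(q) = ωq, g(q) = (m/2)ω²q², β₁ = 2ω, β₀ = 0. -/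
theorem radial_oscillator_satisfies_stability_conditions
    (m ω lam : ℝ) (hm : 0 < m) (hω : 0 < ω)
    (H C : ℝ → ℝ → ℝ)
    (hH : ∀ p q : ℝ, H p q = p ^ 2 / (2 * m) + m / 2 * ω ^ 2 * q ^ 2 + lam * (q ^ 2)⁻¹)
    (hC : ∀ p q : ℝ, C p q = p ^ 2 / (2 * m * ω) + lam / ω * (q ^ 2)⁻¹) :
    ∀ p q : ℝ, q ≠ 0 →
      poissonBracket C H p q = ω * p * q ∧
      poissonBracketIter C H 2 p q = 2 * ω * C p q ∧
      poissonBracketIter C H 3 p q = 0 ∧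
      H p q - (1 / 2) * poissonBracketIter C H 2 p q = m / 2 * ω ^ 2 * q ^ 2 := by
  have hm' : m ≠ 0 := ne_of_gt hm
  have hω' : ω ≠ 0 := ne_of_gt hω
  -- derivative of C in p
  have dCp : ∀ p q : ℝ, deriv (fun p' => C p' q) p = p / (m * ω) := by
    intro p q
    have hf : (fun p' => C p' q) = fun p' => p' ^ 2 / (2 * m * ω) + lam / ω * (q ^ 2)⁻¹ :=
      funext fun p' => hC p' q
    rw [hf, (((hasDerivAt_pow 2 p).div_const (2 * m * ω)).add_const _).deriv]
    field_simp; ring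
  -- derivative of C in q
  have dCq : ∀ p q : ℝ, q ≠ 0 →
      deriv (fun q' => C p q') q = lam / ω * (-(2 * q) / (q ^ 2) ^ 2) := by
    intro p q hq
    have hf : (fun q' => C p q') = fun q' => p ^ 2 / (2 * m * ω) + lam / ω * (q' ^ 2)⁻¹ :=
      funext fun q' => hC p q'
    have h : HasDerivAt (fun q' : ℝ => p ^ 2 / (2 * m * ω) + lam / ω * (q' ^ 2)⁻¹)
        (lam / ω * (-(2 * q ^ 1) / (q ^ 2) ^ 2)) q :=
      (((hasDerivAt_pow 2 q).inv (pow_ne_zero 2 hq)).const_mul (lam / ω)).const_add _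
    rw [hf, h.deriv]; ring_nf
  -- first bracket
  have b1 : ∀ p q : ℝ, q ≠ 0 → poissonBracket C H p q = ω * p * q := by
    intro p q hq
    have dHq : deriv (fun q' => H p q') q
        = m / 2 * ω ^ 2 * (2 * q) + lam * (-(2 * q) / (q ^ 2) ^ 2) := by
      have hf : (fun q' => H p q') =
          fun q' => p ^ 2 / (2 * m) + m / 2 * ω ^ 2 * q' ^ 2 + lam * (q' ^ 2)⁻¹ :=
        funext fun q' => hH p q'
      have h : HasDerivAt
          (fun q' : ℝ => p ^ 2 / (2 * m) + m / 2 * ω ^ 2 * q' ^ 2 + lam * (q' ^ 2)⁻¹)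
          (m / 2 * ω ^ 2 * (2 * q ^ 1) + lam * (-(2 * q ^ 1) / (q ^ 2) ^ 2)) q :=
        (((hasDerivAt_pow 2 q).const_mul (m / 2 * ω ^ 2)).const_add _).add
          (((hasDerivAt_pow 2 q).inv (pow_ne_zero 2 hq)).const_mul lam)
      rw [hf, h.deriv]; ring_nf
    have dHp : deriv (fun p' => H p' q) p = p / m := by
      have hf : (fun p' => H p' q) =
          fun p' => p' ^ 2 / (2 * m) + (m / 2 * ω ^ 2 * q ^ 2 + lam * (q ^ 2)⁻¹) := by
        funext p'; rw [hH p' q]; ring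
      rw [hf, (((hasDerivAt_pow 2 p).div_const (2 * m)).add_const _).deriv]
      field_simp; ring
    rw [poissonBracket, dCp, dCq p q hq, dHq, dHp]
    field_simp; ring
  -- second bracket
  have b2 : ∀ p q : ℝ, q ≠ 0 → poissonBracketIter C H 2 p q = 2 * ω * C p q := by
    intro p q hq
    have hiter : poissonBracketIter C H 2 p q = poissonBracket C (poissonBracket C H) p q := rfl
    have dp : deriv (fun p' => poissonBracket C H p' q) p = ω * q := by
      have hf : (fun p' => poissonBracket C H p' q) = fun p' => ω * p' * q :=
        funext fun p' => b1 p' q hq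
      rw [hf]
      have h : HasDerivAt (fun p' : ℝ => ω * p' * q) (ω * 1 * q) p :=
        ((hasDerivAt_id p).const_mul ω).mul_const q
      rw [h.deriv]; ring
    have dq : deriv (fun q' => poissonBracket C H p q') q = ω * p := by
      have hev : (fun q' => poissonBracket C H p q') =ᶠ[nhds q] fun q' => ω * p * q' :=
        (eventually_ne_nhds hq).mono fun x hx => b1 p x hx
      rw [hev.deriv_eq]
      simpa using (((hasDerivAt_id q).const_mul (ω * p))).deriv
    rw [hiter, poissonBracket, dCp, dCq p q hq, dp, dq, hC]
    field_simp; ring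
  refine fun p q hq => ⟨b1 p q hq, b2 p q hq, ?_, ?_⟩
  · have hiter : poissonBracketIter C H 3 p q
        = poissonBracket C (poissonBracketIter C H 2) p q := rfl
    have dp : deriv (fun p' => poissonBracketIter C H 2 p' q) p = 2 * ω * (p / (m * ω)) := by
      have hf : (fun p' => poissonBracketIter C H 2 p' q) = fun p' => 2 * ω * C p' q :=
        funext fun p' => b2 p' q hq
      have hf2 : (fun p' => poissonBracketIter C H 2 p' q)
          = fun p' => 2 * ω * (p' ^ 2 / (2 * m * ω) + lam / ω * (q ^ 2)⁻¹) := by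
        funext p'; rw [b2 p' q hq, hC]
      have h : HasDerivAt
          (fun p' : ℝ => 2 * ω * (p' ^ 2 / (2 * m * ω) + lam / ω * (q ^ 2)⁻¹))
          (2 * ω * (2 * p ^ 1 / (2 * m * ω))) p :=
        (((hasDerivAt_pow 2 p).div_const (2 * m * ω)).add_const _).const_mul (2 * ω)
      rw [hf2, h.deriv]
      field_simp
    have dq : deriv (fun q' => poissonBracketIter C H 2 p q') q
        = 2 * ω * (lam / ω * (-(2 * q) / (q ^ 2) ^ 2)) := by
      have hev : (fun q' => poissonBracketIter C H 2 p q') =ᶠ[nhds q]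
          fun q' => 2 * ω * (p ^ 2 / (2 * m * ω) + lam / ω * (q' ^ 2)⁻¹) := by
        refine (eventually_ne_nhds hq).mono fun x hx => ?_
        simp only [b2 p x hx, hC]
      have h : HasDerivAt
          (fun q' : ℝ => 2 * ω * (p ^ 2 / (2 * m * ω) + lam / ω * (q' ^ 2)⁻¹))
          (2 * ω * (lam / ω * (-(2 * q ^ 1) / (q ^ 2) ^ 2))) q :=
        ((((hasDerivAt_pow 2 q).inv (pow_ne_zero 2 hq)).const_mul (lam / ω)).const_add
          _).const_mul (2 * ω)
      rw [hev.deriv_eq, h.deriv]; ring_nf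
    rw [hiter, poissonBracket, dCp, dCq p q hq, dp, dq]
    field_simp; ring
  · rw [b2 p q hq, hH, hC]
    field_simp; ring
end

section
/- Let I ⊆ ℝ be an open interval and U : I → ℝ differentiable with U'(q) ≠ 0 for every q ∈ I. Let K ∈ ℕ, let g₀, …, g_K : I → ℝ be differentiable, and set g(p,q) = Σ_{k=0}^{K} g_k(q)·pᵏ and C(p,q) = p²/2 + U(q). If the Poisson bracket {C,g} vanishes identically on ℝ × I, then there exist real constants a₀, …, a_{⌊K/2⌋} such that g(p,q) = Σ_{j=0}^{⌊K/2⌋} a_j·C(p,q)ʲ for all (p,q) ∈ ℝ × I; i.e. every function polynomial in the momentum that Poisson-commutes with the complexifier C is a polynomial in C. -/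
open Finset in
lemma coeff_zero_of_sum_eq_zero (N : ℕ) (c : ℕ → ℝ)
    (h : ∀ p : ℝ, ∑ k ∈ Finset.range N, c k * p ^ k = 0) :
    ∀ k < N, c k = 0 := by
  intro k hk
  have hp : (∑ i ∈ Finset.range N, Polynomial.C (c i) * Polynomial.X ^ i : Polynomial ℝ) = 0 := by
    apply Polynomial.funext
    intro r
    simp [Polynomial.eval_finset_sum, h r]
  have := congrArg (fun P => Polynomial.coeff P k) hp
  simpa [Polynomial.finset_sum_coeff, Polynomial.coeff_C_mul, Polynomial.coeff_X_pow,
    Finset.sum_ite_eq' (Finset.range N), hk] using this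

lemma const_on_Ioo {a b : ℝ} (f : ℝ → ℝ)
    (hf : ∀ q ∈ Set.Ioo a b, DifferentiableAt ℝ f q)
    (h0 : ∀ q ∈ Set.Ioo a b, deriv f q = 0) :
    ∀ x ∈ Set.Ioo a b, ∀ y ∈ Set.Ioo a b, f x = f y := by
  intro x hx y hy
  refine (convex_Ioo a b).is_const_of_fderivWithin_eq_zero
    (fun z hz => (hf z hz).differentiableWithinAt) (fun z hz => ?_) hx hy
  rw [fderivWithin_of_isOpen isOpen_Ioo hz]
  ext
  simp [fderiv_eq_smul_deriv, h0 z hz]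

lemma deriv_zero_of_eqzero_Ioo {a b : ℝ} (f : ℝ → ℝ)
    (h0 : ∀ q ∈ Set.Ioo a b, f q = 0) (q : ℝ) (hq : q ∈ Set.Ioo a b) :
    deriv f q = 0 := by
  have : f =ᶠ[nhds q] (fun _ => 0) :=
    Filter.eventuallyEq_of_mem (isOpen_Ioo.mem_nhds hq) h0
  rw [this.deriv_eq]
  simp

noncomputable def phi (m : ℕ) (u : ℝ) (k : ℕ) : ℝ :=
  if Even k then (m.choose (k / 2) : ℝ) * u ^ (m - k / 2) / 2 ^ (k / 2) else 0

lemma pow_expand (m : ℕ) (p u : ℝ) :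
    (p ^ 2 / 2 + u) ^ m = ∑ k ∈ Finset.range (2 * m + 1), phi m u k * p ^ k := by
  rw [add_pow]
  rw [show ∑ k ∈ Finset.range (2 * m + 1), phi m u k * p ^ k
      = ∑ k ∈ (Finset.range (m + 1)).image (fun j => 2 * j), phi m u k * p ^ k from ?_]
  · rw [Finset.sum_image (fun i _ j _ h => by omega)]
    apply Finset.sum_congr rfl
    intro j hj
    have : Even (2 * j) := even_two_mul j
    simp only [phi, if_pos this, Nat.mul_div_cancel_left j (by norm_num : 0 < 2)]
    rw [div_pow, pow_mul]
    ring
  · symm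
    apply Finset.sum_subset
    · intro k hk
      simp only [Finset.mem_image, Finset.mem_range] at hk ⊢
      obtain ⟨j, hj, rfl⟩ := hk
      omega
    · intro k hk hnk
      have : ¬ Even k := by
        intro he
        apply hnk
        simp only [Finset.mem_image, Finset.mem_range] at hk ⊢
        obtain ⟨j, rfl⟩ := he
        exact ⟨j, by omega, by omega⟩
      simp [phi, this]

lemma phi_top (m : ℕ) (u : ℝ) : phi m u (2 * m) = 1 / 2 ^ m := by
  have : Even (2 * m) := even_two_mul m
  simp [phi, this, Nat.mul_div_cancel_left m (by norm_num : 0 < 2)]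

lemma phi_gt (m k : ℕ) (u : ℝ) (h : 2 * m < k) : phi m u k = 0 := by
  unfold phi
  split
  · rename_i he
    obtain ⟨j, rfl⟩ := he
    have : m < j := by omega
    simp [Nat.choose_eq_zero_of_lt, show m < (j + j) / 2 by omega]
  · rfl

lemma phi_diff (m : ℕ) (U : ℝ → ℝ) (k : ℕ) (q : ℝ) (hU : DifferentiableAt ℝ U q) :
    DifferentiableAt ℝ (fun q => phi m (U q) k) q := by
  by_cases he : Even k
  · simp only [phi, if_pos he]
    exact (((differentiableAt_const _).mul (hU.pow _)).div_const _)
  · simp only [phi, if_neg he]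
    exact differentiableAt_const _

lemma phi_deriv (m : ℕ) (U : ℝ → ℝ) (k : ℕ) (q : ℝ) (hU : DifferentiableAt ℝ U q) :
    deriv (fun q => phi m (U q) k) q = (k + 2 : ℝ) * deriv U q * phi m (U q) (k + 2) := by
  by_cases he : Even k
  · obtain ⟨j, rfl⟩ := he
    have h2 : Even (j + j + 2) := by exact ⟨j+1, by ring⟩
    have hdiv : (j + j) / 2 = j := by omega
    have hdiv2 : (j + j + 2) / 2 = j + 1 := by omega
    have hE : Even (j + j) := ⟨j, rfl⟩
    simp only [phi, hE, h2, if_true, hdiv, hdiv2]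
    rcases le_or_gt m j with hmj | hjm
    · have h1 : m - j = 0 := by omega
      have h2 : m.choose (j + 1) = 0 := Nat.choose_eq_zero_of_lt (by omega)
      simp [h1, h2]
    · rw [deriv_div_const, deriv_const_mul _ (hU.fun_pow _), deriv_fun_pow hU]
      have hcast : ((m - j : ℕ) : ℝ) = (m : ℝ) - j := by
        push_cast [Nat.cast_sub hjm.le]; ring
      have hch : (m.choose (j + 1) : ℝ) * (j + 1) = (m.choose j : ℝ) * ((m:ℝ) - j) := by
        have := Nat.choose_succ_right_eq m j
        have := congrArg (Nat.cast (R := ℝ)) this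
        push_cast [Nat.cast_sub hjm.le] at this
        linarith
      have hexp : m - j - 1 = m - (j + 1) := by omega
      rw [hcast, hexp]
      push_cast
      linear_combination (-(U q ^ (m - (j + 1)) * deriv U q) / 2 ^ j) * hch
  · have ho2 : ¬ Even (k + 2) := by simpa [Nat.even_add_one, parity_simps] using he
    simp only [phi, if_neg he, if_neg ho2]
    simp

lemma odd_vanish {a b : ℝ} (U : ℝ → ℝ)
    (hU' : ∀ q ∈ Set.Ioo a b, deriv U q ≠ 0) (g : ℕ → ℝ → ℝ)
    (hrec : ∀ k, ∀ q ∈ Set.Ioo a b, deriv (g k) q = (k + 2 : ℝ) * deriv U q * g (k + 2) q)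
    (h1 : ∀ q ∈ Set.Ioo a b, g 1 q = 0) :
    ∀ j, ∀ q ∈ Set.Ioo a b, g (2 * j + 1) q = 0 := by
  intro j
  induction j with
  | zero => simpa using h1
  | succ j ih =>
    intro q hq
    have hd : deriv (g (2 * j + 1)) q = 0 := deriv_zero_of_eqzero_Ioo _ ih q hq
    have h2 := hrec (2 * j + 1) q hq
    rw [hd] at h2
    have h3 : 2 * (j + 1) + 1 = 2 * j + 1 + 2 := by ring
    rw [h3]
    have hne : ((2 * j + 1 : ℕ) : ℝ) + 2 ≠ 0 := by positivity
    rcases mul_eq_zero.mp h2.symm with h | h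
    · rcases mul_eq_zero.mp h with h' | h'
      · exact absurd h' hne
      · exact absurd h' (hU' q hq)
    · exact h

lemma aux_poly {a b : ℝ} (hab : a < b) (U : ℝ → ℝ)
    (hU : ∀ q ∈ Set.Ioo a b, DifferentiableAt ℝ U q)
    (hU' : ∀ q ∈ Set.Ioo a b, deriv U q ≠ 0) :
    ∀ K : ℕ, ∀ g : ℕ → ℝ → ℝ,
    (∀ k, K < k → ∀ q ∈ Set.Ioo a b, g k q = 0) →
    (∀ k, ∀ q ∈ Set.Ioo a b, DifferentiableAt ℝ (g k) q) →
    (∀ k, ∀ q ∈ Set.Ioo a b, deriv (g k) q = (k + 2 : ℝ) * deriv U q * g (k + 2) q) →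
    (∀ q ∈ Set.Ioo a b, g 1 q = 0) →
    ∃ A : ℕ → ℝ, ∀ p : ℝ, ∀ q ∈ Set.Ioo a b,
      ∑ k ∈ Finset.range (K + 1), g k q * p ^ k
        = ∑ j ∈ Finset.range (K / 2 + 1), A j * (p ^ 2 / 2 + U q) ^ j := by
  have hq0 : (a + b) / 2 ∈ Set.Ioo a b := ⟨by linarith, by linarith⟩
  set q0 := (a + b) / 2 with hq0def
  intro K
  induction K with
  | zero =>
    intro g hzero hdiff hrec h1
    refine ⟨fun _ => g 0 q0, fun p q hq => ?_⟩
    have hd0 : ∀ q ∈ Set.Ioo a b, deriv (g 0) q = 0 := by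
      intro q hq
      rw [hrec 0 q hq, hzero 2 (by norm_num) q hq]
      ring
    simpa using const_on_Ioo (g 0) (hdiff 0) hd0 q hq q0 hq0
  | succ K ih =>
    intro g hzero hdiff hrec h1
    by_cases hpar : Even (K + 1)
    · -- K + 1 even : top coefficient constant, subtract c * 2^m * C^m
      obtain ⟨m, hm⟩ := hpar
      have hm1 : 1 ≤ m := by omega
      have hdK1 : ∀ q ∈ Set.Ioo a b, deriv (g (K + 1)) q = 0 := by
        intro q hq
        rw [hrec (K + 1) q hq, hzero (K + 1 + 2) (by omega) q hq]
        ring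
      set c := g (K + 1) q0 with hcdef
      have hconst : ∀ q ∈ Set.Ioo a b, g (K + 1) q = c :=
        fun q hq => const_on_Ioo (g (K + 1)) (hdiff (K + 1)) hdK1 q hq q0 hq0
      set h : ℕ → ℝ → ℝ := fun k q => g k q - c * 2 ^ m * phi m (U q) k with hdef
      have hzero_h : ∀ k, K < k → ∀ q ∈ Set.Ioo a b, h k q = 0 := by
        intro k hk q hq
        rcases eq_or_lt_of_le (Nat.lt_iff_add_one_le.mp hk) with hk' | hk'
        · simp only [hdef, ← hk']
          rw [hconst q hq, show K + 1 = 2 * m by omega, phi_top]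
          field_simp
          ring
        · simp only [hdef]
          rw [hzero k (by omega) q hq, phi_gt m k (U q) (by omega)]
          ring
      have hdiff_h : ∀ k, ∀ q ∈ Set.Ioo a b, DifferentiableAt ℝ (h k) q := by
        intro k q hq
        exact (hdiff k q hq).sub ((phi_diff m U k q (hU q hq)).const_mul _)
      have hrec_h : ∀ k, ∀ q ∈ Set.Ioo a b,
          deriv (h k) q = (k + 2 : ℝ) * deriv U q * h (k + 2) q := by
        intro k q hq
        have : deriv (h k) q = deriv (g k) q
            - c * 2 ^ m * deriv (fun q => phi m (U q) k) q := by
          simp only [hdef]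
          rw [deriv_fun_sub (hdiff k q hq) ((phi_diff m U k q (hU q hq)).const_mul _),
            deriv_const_mul _ (phi_diff m U k q (hU q hq))]
        rw [this, hrec k q hq, phi_deriv m U k q (hU q hq)]
        simp only [hdef]
        ring
      have h1_h : ∀ q ∈ Set.Ioo a b, h 1 q = 0 := by
        intro q hq
        simp only [hdef]
        rw [h1 q hq]
        simp [phi]
      obtain ⟨A', hA'⟩ := ih h hzero_h hdiff_h hrec_h h1_h
      refine ⟨fun j => if j = m then c * 2 ^ m else A' j, fun p q hq => ?_⟩
      have hsplit : ∑ k ∈ Finset.range (K + 1 + 1), g k q * p ^ k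
          = ∑ k ∈ Finset.range (K + 1 + 1), h k q * p ^ k
            + c * 2 ^ m * ∑ k ∈ Finset.range (K + 1 + 1), phi m (U q) k * p ^ k := by
        rw [Finset.mul_sum, ← Finset.sum_add_distrib]
        apply Finset.sum_congr rfl
        intro k _
        simp only [hdef]
        ring
      have hKm : K + 1 + 1 = 2 * m + 1 := by omega
      have hphi : ∑ k ∈ Finset.range (K + 1 + 1), phi m (U q) k * p ^ k
          = (p ^ 2 / 2 + U q) ^ m := by
        rw [hKm, ← pow_expand]
      have hh : ∑ k ∈ Finset.range (K + 1 + 1), h k q * p ^ k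
          = ∑ j ∈ Finset.range (K / 2 + 1), A' j * (p ^ 2 / 2 + U q) ^ j := by
        rw [Finset.sum_range_succ, hzero_h (K + 1) (by omega) q hq]
        simpa using hA' p q hq
      have hd2 : (K + 1) / 2 = m := by omega
      have hd1 : K / 2 + 1 = m := by omega
      have hrhs : ∑ j ∈ Finset.range ((K + 1) / 2 + 1),
            (if j = m then c * 2 ^ m else A' j) * (p ^ 2 / 2 + U q) ^ j
          = (∑ j ∈ Finset.range (K / 2 + 1), A' j * (p ^ 2 / 2 + U q) ^ j)
            + c * 2 ^ m * (p ^ 2 / 2 + U q) ^ m := by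
        rw [hd2, Finset.sum_range_succ, if_pos rfl]
        congr 1
        rw [← hd1]
        apply Finset.sum_congr rfl
        intro j hj
        rw [if_neg (by simp only [Finset.mem_range] at hj; omega)]
      rw [hsplit, hphi, hh, hrhs]
    · -- K + 1 odd : top coefficient vanishes
      have hKodd : ¬ Even (K + 1) := hpar
      obtain ⟨j, hj⟩ : ∃ j, K + 1 = 2 * j + 1 := by
        rcases Nat.even_or_odd (K + 1) with h | h
        · exact absurd h hpar
        · exact ⟨h.choose, by have := h.choose_spec; omega⟩
      have hK1zero : ∀ q ∈ Set.Ioo a b, g (K + 1) q = 0 := by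
        intro q hq
        rw [hj]
        exact odd_vanish U hU' g hrec h1 j q hq
      have hzero' : ∀ k, K < k → ∀ q ∈ Set.Ioo a b, g k q = 0 := by
        intro k hk q hq
        rcases eq_or_lt_of_le (Nat.lt_iff_add_one_le.mp hk) with hk' | hk'
        · rw [← hk']; exact hK1zero q hq
        · exact hzero k (by omega) q hq
      obtain ⟨A, hA⟩ := ih g hzero' hdiff hrec h1
      refine ⟨A, fun p q hq => ?_⟩
      rw [Finset.sum_range_succ, hK1zero q hq]
      have hEvenK : K % 2 = 0 := by
        omega
      have : (K + 1) / 2 = K / 2 := by omega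
      rw [this]
      simpa using hA p q hq

/-- Every function polynomial in the momentum that Poisson-commutes with the
complexifier `C = p²/2 + U(q)` (with `U' ≠ 0`) is a polynomial in `C`. -/
theorem poisson_commutant_of_complexifier_is_polynomial_in_C
    (a b : ℝ) (hab : a < b)
    (U : ℝ → ℝ)
    (hU : ∀ q ∈ Set.Ioo a b, DifferentiableAt ℝ U q)
    (hU' : ∀ q ∈ Set.Ioo a b, deriv U q ≠ 0)
    (K : ℕ) (g : ℕ → ℝ → ℝ)
    (hg : ∀ k ≤ K, ∀ q ∈ Set.Ioo a b, DifferentiableAt ℝ (g k) q)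
    (G C : ℝ → ℝ → ℝ)
    (hG : ∀ p q : ℝ, G p q = ∑ k ∈ Finset.range (K + 1), g k q * p ^ k)
    (hC : ∀ p q : ℝ, C p q = p ^ 2 / 2 + U q)
    (hcomm : ∀ p : ℝ, ∀ q ∈ Set.Ioo a b, poissonBracket C G p q = 0) :
    ∃ A : ℕ → ℝ, ∀ p : ℝ, ∀ q ∈ Set.Ioo a b,
      G p q = ∑ j ∈ Finset.range (K / 2 + 1), A j * C p q ^ j := by
  -- Step 1: turn the bracket condition into an explicit polynomial identity in p
  have hderivs : ∀ p : ℝ, ∀ q ∈ Set.Ioo a b,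
      p * (∑ k ∈ Finset.range (K + 1), deriv (g k) q * p ^ k)
        - deriv U q * (∑ k ∈ Finset.range (K + 1), g k q * ((k : ℝ) * p ^ (k - 1))) = 0 := by
    intro p q hq
    have hb := hcomm p q hq
    simp only [poissonBracket] at hb
    have e1 : deriv (fun p' => C p' q) p = p := by
      have hfe : (fun p' => C p' q) = fun p' => p' ^ 2 / 2 + U q := funext fun p' => hC p' q
      rw [hfe]
      have hd := ((hasDerivAt_pow 2 p).div_const 2).add_const (U q)
      rw [hd.deriv]; norm_num
    have e2 : deriv (fun q' => C p q') q = deriv U q := by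
      have hfe : (fun q' => C p q') = fun q' => p ^ 2 / 2 + U q' := funext fun q' => hC p q'
      rw [hfe, deriv_const_add]
    have e3 : deriv (fun q' => G p q') q
        = ∑ k ∈ Finset.range (K + 1), deriv (g k) q * p ^ k := by
      have hfe : (fun q' => G p q') = fun q' => ∑ k ∈ Finset.range (K + 1), g k q' * p ^ k :=
        funext fun q' => hG p q'
      rw [hfe, deriv_fun_sum (fun k hk =>
        (hg k (Finset.mem_range_succ_iff.mp hk) q hq).mul_const _)]
      exact Finset.sum_congr rfl fun k hk =>
        deriv_mul_const (hg k (Finset.mem_range_succ_iff.mp hk) q hq) _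
    have e4 : deriv (fun p' => G p' q) p
        = ∑ k ∈ Finset.range (K + 1), g k q * ((k : ℝ) * p ^ (k - 1)) := by
      have hfe : (fun p' => G p' q) = fun p' => ∑ k ∈ Finset.range (K + 1), g k q * p' ^ k :=
        funext fun p' => hG p' q
      rw [hfe, deriv_fun_sum (fun k _ => (differentiableAt_pow k).const_mul _)]
      exact Finset.sum_congr rfl fun k _ => by
        rw [deriv_const_mul _ (differentiableAt_pow k), deriv_pow_field]
    rw [e1, e2, e3, e4] at hb
    exact hb
  -- Step 2: extract coefficient relations
  have key : ∀ q ∈ Set.Ioo a b, ∀ i, i < K + 2 →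
      (if i = 0 then (0:ℝ) else deriv (g (i - 1)) q)
        = deriv U q * (((i : ℝ) + 1) * (if i + 1 ≤ K then g (i + 1) q else 0)) := by
    intro q hq
    have hsum : ∀ p : ℝ, ∑ i ∈ Finset.range (K + 2),
        ((if i = 0 then (0:ℝ) else deriv (g (i - 1)) q)
          - deriv U q * (((i : ℝ) + 1) * (if i + 1 ≤ K then g (i + 1) q else 0))) * p ^ i
        = 0 := by
      intro p
      have hb := hderivs p q hq
      have hs1 : ∑ i ∈ Finset.range (K + 2),
          (if i = 0 then (0:ℝ) else deriv (g (i - 1)) q) * p ^ i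
          = p * ∑ k ∈ Finset.range (K + 1), deriv (g k) q * p ^ k := by
        rw [Finset.sum_range_succ']
        simp only [if_neg (Nat.succ_ne_zero _), eq_self_iff_true, if_true, Nat.add_sub_cancel]
        rw [Finset.mul_sum]
        simp only [pow_zero, mul_one, zero_mul, add_zero]
        exact Finset.sum_congr rfl fun i _ => by ring
      have hs2 : ∑ i ∈ Finset.range (K + 2),
          (((i : ℝ) + 1) * (if i + 1 ≤ K then g (i + 1) q else 0)) * p ^ i
          = ∑ k ∈ Finset.range (K + 1), g k q * ((k : ℝ) * p ^ (k - 1)) := by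
        rw [Finset.sum_range_succ, Finset.sum_range_succ]
        rw [if_neg (by omega), if_neg (by omega)]
        rw [Finset.sum_range_succ' (fun k => g k q * ((k : ℝ) * p ^ (k - 1))) K]
        simp only [mul_zero, zero_mul, add_zero, Nat.cast_zero, Nat.add_sub_cancel]
        apply Finset.sum_congr rfl
        intro i hi
        rw [if_pos (by simpa using Finset.mem_range.mp hi)]
        push_cast
        ring
      calc ∑ i ∈ Finset.range (K + 2),
          ((if i = 0 then (0:ℝ) else deriv (g (i - 1)) q)
            - deriv U q * (((i : ℝ) + 1) * (if i + 1 ≤ K then g (i + 1) q else 0))) * p ^ i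
          = (∑ i ∈ Finset.range (K + 2),
              (if i = 0 then (0:ℝ) else deriv (g (i - 1)) q) * p ^ i)
            - deriv U q * ∑ i ∈ Finset.range (K + 2),
              (((i : ℝ) + 1) * (if i + 1 ≤ K then g (i + 1) q else 0)) * p ^ i := by
            rw [Finset.mul_sum, ← Finset.sum_sub_distrib]
            exact Finset.sum_congr rfl fun i _ => by ring
        _ = 0 := by rw [hs1, hs2]; exact hb
    intro i hi
    have h0 := coeff_zero_of_sum_eq_zero (K + 2) _ hsum i hi
    exact sub_eq_zero.mp h0
  -- Step 3: package into the aux lemma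
  set gx : ℕ → ℝ → ℝ := fun k => if k ≤ K then g k else fun _ => 0 with hgx
  have hgxval : ∀ k, k ≤ K → gx k = g k := fun k hk => by simp [hgx, hk]
  have hgxval' : ∀ k, ¬ (k ≤ K) → gx k = fun _ => 0 := fun k hk => by simp [hgx, hk]
  have hzero : ∀ k, K < k → ∀ q ∈ Set.Ioo a b, gx k q = 0 := by
    intro k hk q _
    rw [hgxval' k (by omega)]
  have hdiffx : ∀ k, ∀ q ∈ Set.Ioo a b, DifferentiableAt ℝ (gx k) q := by
    intro k q hq
    by_cases hk : k ≤ K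
    · rw [hgxval k hk]; exact hg k hk q hq
    · rw [hgxval' k hk]; exact differentiableAt_const _
  have hrecx : ∀ k, ∀ q ∈ Set.Ioo a b,
      deriv (gx k) q = ((k : ℝ) + 2) * deriv U q * gx (k + 2) q := by
    intro k q hq
    by_cases hk : k ≤ K
    · rw [hgxval k hk]
      have hkey := key q hq (k + 1) (by omega)
      rw [if_neg (Nat.succ_ne_zero _), Nat.add_sub_cancel] at hkey
      rw [hkey]
      push_cast
      by_cases hk2 : k + 2 ≤ K
      · rw [if_pos hk2, hgxval (k + 2) hk2]; ring
      · rw [if_neg hk2, hgxval' (k + 2) hk2]; ring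
    · rw [hgxval' k hk, hgxval' (k + 2) (by omega)]
      simp
  have h1x : ∀ q ∈ Set.Ioo a b, gx 1 q = 0 := by
    intro q hq
    have hkey := key q hq 0 (by omega)
    simp only [if_pos rfl, Nat.cast_zero, zero_add, one_mul] at hkey
    have := (mul_eq_zero.mp hkey.symm).resolve_left (hU' q hq)
    by_cases hk : 1 ≤ K
    · rw [hgxval 1 hk]
      rw [if_pos hk] at this
      exact this
    · rw [hgxval' 1 hk]
  obtain ⟨A, hA⟩ := aux_poly hab U hU hU' K gx hzero hdiffx hrecx h1x
  refine ⟨A, fun p q hq => ?_⟩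
  rw [hG p q]
  have : ∑ k ∈ Finset.range (K + 1), g k q * p ^ k
      = ∑ k ∈ Finset.range (K + 1), gx k q * p ^ k := by
    apply Finset.sum_congr rfl
    intro k hk
    rw [hgxval k (Finset.mem_range_succ_iff.mp hk)]
  rw [this, hA p q hq]
  exact Finset.sum_congr rfl fun j _ => by rw [hC p q]
end

section
/- Let I ⊆ ℝ be an open interval and U, a, b : I → ℝ differentiable functions. Set C(p,q) = p²/2 + U(q) and g(p,q) = a(q)·p + b(q). If the Poisson bracket satisfies {C,g}(p,q) = 1 for all (p,q) ∈ ℝ × I, then a is a nonzero constant, b is constant, and U'(q) = −1/a for all q ∈ I; in particular there exist constants c₀, c₁ ∈ ℝ with c₁ ≠ 0 such that U(q) = c₁·q + c₀ on I. -/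
/-- A function with zero derivative on an open interval is constant there. -/
lemma const_of_deriv_zero_Ioo {c d : ℝ} {f : ℝ → ℝ}
    (hf : ∀ q ∈ Set.Ioo c d, DifferentiableAt ℝ f q)
    (hf' : ∀ q ∈ Set.Ioo c d, deriv f q = 0)
    {x y : ℝ} (hx : x ∈ Set.Ioo c d) (hy : y ∈ Set.Ioo c d) : f x = f y := by
  refine (convex_Ioo c d).is_const_of_fderivWithin_eq_zero
    (fun q hq => (hf q hq).differentiableWithinAt) (fun q hq => ?_) hx hy
  rw [fderivWithin_of_isOpen isOpen_Ioo hq]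
  have h : HasDerivAt f 0 q := by
    have := (hf q hq).hasDerivAt
    rwa [hf' q hq] at this
  rw [h.hasFDerivAt.fderiv]
  ext; simp



/-- Lemma (a): if `{C, a(q)p + b(q)} = 1` with `C = p²/2 + U(q)`, then `a` is a
nonzero constant, `b` is constant, `U' = −1/a`, and `U` is affine linear. -/
theorem bracket_eq_one_forces_linear_U
    (c d : ℝ) (hcd : c < d)
    (U A B : ℝ → ℝ)
    (hU : ∀ q ∈ Set.Ioo c d, DifferentiableAt ℝ U q)
    (hA : ∀ q ∈ Set.Ioo c d, DifferentiableAt ℝ A q)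
    (hB : ∀ q ∈ Set.Ioo c d, DifferentiableAt ℝ B q)
    (C g : ℝ → ℝ → ℝ)
    (hC : ∀ p q : ℝ, C p q = p ^ 2 / 2 + U q)
    (hg : ∀ p q : ℝ, g p q = A q * p + B q)
    (hbr : ∀ p : ℝ, ∀ q ∈ Set.Ioo c d, poissonBracket C g p q = 1) :
    (∃ a₀ : ℝ, a₀ ≠ 0 ∧ (∀ q ∈ Set.Ioo c d, A q = a₀) ∧
      ∀ q ∈ Set.Ioo c d, deriv U q = -1 / a₀) ∧
    (∃ b₀ : ℝ, ∀ q ∈ Set.Ioo c d, B q = b₀) ∧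
    (∃ c₀ c₁ : ℝ, c₁ ≠ 0 ∧ ∀ q ∈ Set.Ioo c d, U q = c₁ * q + c₀) := by
  -- the bracket, computed
  have key : ∀ p : ℝ, ∀ q ∈ Set.Ioo c d,
      p * (deriv A q * p + deriv B q) - deriv U q * A q = 1 := by
    intro p q hq
    have h1 : (fun p' => C p' q) = fun p' => p' ^ 2 / 2 + U q := funext fun p' => hC p' q
    have h2 : (fun q' => g p q') = fun q' => A q' * p + B q' := funext fun q' => hg p q'
    have h3 : (fun q' => C p q') = fun q' => p ^ 2 / 2 + U q' := funext fun q' => hC p q'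
    have h4 : (fun p' => g p' q) = fun p' => A q * p' + B q := funext fun p' => hg p' q
    have e1 : deriv (fun p' => C p' q) p = p := by
      rw [h1]
      have : HasDerivAt (fun p' : ℝ => p' ^ 2 / 2 + U q) p p := by
        simpa using ((hasDerivAt_pow 2 p).div_const 2).add_const (U q)
      exact this.deriv
    have e2 : deriv (fun q' => g p q') q = deriv A q * p + deriv B q := by
      rw [h2]
      have : HasDerivAt (fun q' : ℝ => A q' * p + B q') (deriv A q * p + deriv B q) q :=
        ((hA q hq).hasDerivAt.mul_const p).add (hB q hq).hasDerivAt
      exact this.deriv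
    have e3 : deriv (fun q' => C p q') q = deriv U q := by
      rw [h3]
      have : HasDerivAt (fun q' : ℝ => p ^ 2 / 2 + U q') (deriv U q) q := by
        simpa using (hU q hq).hasDerivAt.const_add (p ^ 2 / 2)
      exact this.deriv
    have e4 : deriv (fun p' => g p' q) p = A q := by
      rw [h4]
      have : HasDerivAt (fun p' : ℝ => A q * p' + B q) (A q) p := by
        simpa using ((hasDerivAt_id p).const_mul (A q)).add_const (B q)
      exact this.deriv
    have := hbr p q hq
    rw [poissonBracket, e1, e2, e3, e4] at this
    linarith [this]
  have hU'A : ∀ q ∈ Set.Ioo c d, deriv U q * A q = -1 := by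
    intro q hq
    have := key 0 q hq; linarith
  have hA' : ∀ q ∈ Set.Ioo c d, deriv A q = 0 := by
    intro q hq
    have h1 := key 1 q hq
    have h2 := key (-1) q hq
    have h3 := hU'A q hq
    linarith
  have hB' : ∀ q ∈ Set.Ioo c d, deriv B q = 0 := by
    intro q hq
    have h1 := key 1 q hq
    have h2 := key (-1) q hq
    linarith
  set m := (c + d) / 2 with hm
  have hmem : m ∈ Set.Ioo c d := ⟨by linarith, by linarith⟩
  have hAconst : ∀ q ∈ Set.Ioo c d, A q = A m :=
    fun q hq => const_of_deriv_zero_Ioo hA hA' hq hmem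
  have hBconst : ∀ q ∈ Set.Ioo c d, B q = B m :=
    fun q hq => const_of_deriv_zero_Ioo hB hB' hq hmem
  have hAne : A m ≠ 0 := by
    intro h
    have := hU'A m hmem
    rw [h, mul_zero] at this
    norm_num at this
  have hU' : ∀ q ∈ Set.Ioo c d, deriv U q = -1 / A m := by
    intro q hq
    have h1 := hU'A q hq
    rw [hAconst q hq] at h1
    field_simp at h1 ⊢
    linarith
  refine ⟨⟨A m, hAne, hAconst, hU'⟩, ⟨B m, hBconst⟩, ?_⟩
  -- U is affine
  refine ⟨U m - (-1 / A m) * m, -1 / A m, div_ne_zero (by norm_num) hAne, ?_⟩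
  set k := -1 / A m with hk
  have hf : ∀ q ∈ Set.Ioo c d, DifferentiableAt ℝ (fun q' => U q' - k * q') q :=
    fun q hq => (hU q hq).sub ((differentiableAt_id.const_mul k))
  have hf' : ∀ q ∈ Set.Ioo c d, deriv (fun q' => U q' - k * q') q = 0 := by
    intro q hq
    have : HasDerivAt (fun q' => U q' - k * q') (deriv U q - k) q :=
      (hU q hq).hasDerivAt.sub (by simpa using (hasDerivAt_id q).const_mul k)
    rw [this.deriv, hU' q hq, sub_self]
  intro q hq
  have := const_of_deriv_zero_Ioo hf hf' hq hmem
  have : U q - k * q = U m - k * m := this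
  linarith
end

section
/- Let I ⊆ ℝ be an open interval and α, V, U : I → ℝ smooth functions. Define H(p,q) = α(q)·p² + V(q) and C(p,q) = p²/2 + U(q) on ℝ × I. Then for every n ∈ ℕ there exist smooth functions c₀, …, c_{n+2} : I → ℝ such that the n-fold iterated Poisson bracket satisfies {C,H}_{(n)}(p,q) = Σ_{k=0}^{n+2} c_k(q)·pᵏ for all (p,q) ∈ ℝ × I, and c_k = 0 whenever k and n have different parity; i.e. {C,H}_{(n)} is a polynomial in the momentum p of degree at most n+2 containing only powers of p congruent to n modulo 2. -/
private lemma sum_identity_pb (e f : ℕ → ℝ) (u p : ℝ) (N : ℕ) :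
    p * (∑ k ∈ Finset.range (N + 1), e k * p ^ k)
      - u * ∑ k ∈ Finset.range (N + 1), f k * ((k : ℝ) * p ^ (k - 1))
    = (∑ k ∈ Finset.range (N + 2),
        ((if k = 0 then (0:ℝ) else e (k - 1)) - u * (((k : ℝ) + 1) * f (k + 1))) * p ^ k)
      + u * ((((N:ℝ) + 1) + 1) * f (N + 2) * p ^ (N + 1) + ((N:ℝ) + 1) * f (N + 1) * p ^ N) := by
  induction N with
  | zero => simp [Finset.sum_range_succ]; ring
  | succ N ih =>
    rw [show N + 1 + 1 = (N + 1) + 1 from rfl]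
    rw [Finset.sum_range_succ (fun k => e k * p ^ k) (N+1)]
    rw [Finset.sum_range_succ (fun k => f k * ((k:ℝ) * p ^ (k-1))) (N+1)]
    rw [show N + 1 + 2 = (N + 2) + 1 from rfl]
    rw [Finset.sum_range_succ _ (N+2)]
    have h1 : (N + 2 : ℕ) ≠ 0 := by omega
    have h2 : (N + 2 : ℕ) - 1 = N + 1 := by omega
    rw [if_neg h1, h2]
    push_cast
    linear_combination ih

/-- For `H = α(q)p² + V(q)` and `C = p²/2 + U(q)`, the iterated bracket
`{C,H}_{(n)}` is a polynomial in `p` of degree at most `n+2` containing only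
powers of `p` congruent to `n` modulo 2. -/
theorem iterated_bracket_is_momentum_polynomial_with_parity
    (a b : ℝ) (hab : a < b)
    (α V U : ℝ → ℝ)
    (hα : ContDiffOn ℝ (⊤ : ℕ∞) α (Set.Ioo a b))
    (hV : ContDiffOn ℝ (⊤ : ℕ∞) V (Set.Ioo a b))
    (hU : ContDiffOn ℝ (⊤ : ℕ∞) U (Set.Ioo a b))
    (H C : ℝ → ℝ → ℝ)
    (hH : ∀ p q : ℝ, H p q = α q * p ^ 2 + V q)
    (hC : ∀ p q : ℝ, C p q = p ^ 2 / 2 + U q) :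
    ∀ n : ℕ, ∃ c : ℕ → ℝ → ℝ,
      (∀ k ≤ n + 2, ContDiffOn ℝ (⊤ : ℕ∞) (c k) (Set.Ioo a b)) ∧
      (∀ p : ℝ, ∀ q ∈ Set.Ioo a b,
        poissonBracketIter C H n p q =
          ∑ k ∈ Finset.range (n + 3), c k q * p ^ k) ∧
      (∀ k, k % 2 ≠ n % 2 → ∀ q ∈ Set.Ioo a b, c k q = 0) := by
  have hIoo : IsOpen (Set.Ioo a b) := isOpen_Ioo
  have diffAt : ∀ (f : ℝ → ℝ), ContDiffOn ℝ (⊤ : ℕ∞) f (Set.Ioo a b) →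
      ∀ q ∈ Set.Ioo a b, DifferentiableAt ℝ f q := fun f hf q hq =>
    (hf.differentiableOn (by simp)).differentiableAt (hIoo.mem_nhds hq)
  -- derivatives of C
  have hCp : ∀ p q : ℝ, deriv (fun p' => C p' q) p = p := by
    intro p q
    have h : (fun p' => C p' q) = fun p' => p' ^ 2 / 2 + U q := funext fun p' => hC p' q
    rw [h, deriv_add_const]
    rw [((hasDerivAt_pow 2 p).div_const 2).deriv]
    push_cast; ring
  have hCq : ∀ p q : ℝ, deriv (fun q' => C p q') q = deriv U q := by
    intro p q
    have h : (fun q' => C p q') = fun q' => p ^ 2 / 2 + U q' := funext fun q' => hC p q'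
    rw [h, deriv_const_add]
  -- strengthened statement
  suffices hmain : ∀ n : ℕ, ∃ c : ℕ → ℝ → ℝ,
      (∀ k, ContDiffOn ℝ (⊤ : ℕ∞) (c k) (Set.Ioo a b)) ∧
      (∀ p : ℝ, ∀ q ∈ Set.Ioo a b,
        poissonBracketIter C H n p q = ∑ k ∈ Finset.range (n + 3), c k q * p ^ k) ∧
      (∀ k, (k % 2 ≠ n % 2 ∨ n + 2 < k) → c k = 0) by
    intro n
    obtain ⟨c, h1, h2, h3⟩ := hmain n
    exact ⟨c, fun k _ => h1 k, h2, fun k hk q _ => by rw [h3 k (Or.inl hk)]; rfl⟩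
  intro n
  induction n with
  | zero =>
    refine ⟨fun k => if k = 0 then V else if k = 2 then α else 0, ?_, ?_, ?_⟩
    · intro k
      by_cases h0 : k = 0
      · simpa [h0] using hV
      by_cases h2 : k = 2
      · simpa [h0, h2] using hα
      · simp [h0, h2]
        exact contDiffOn_const
    · intro p q hq
      simp [poissonBracketIter, hH p q, Finset.sum_range_succ]
      ring
    · intro k hk
      have h0 : k ≠ 0 := by rcases hk with h | h <;> omega
      have h2 : k ≠ 2 := by rcases hk with h | h <;> omega
      show (if k = 0 then V else if k = 2 then α else 0) = 0
      rw [if_neg h0, if_neg h2]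
  | succ n ih =>
    obtain ⟨c, hsm, hsum, hz⟩ := ih
    set g := poissonBracketIter C H n with hg
    -- the new coefficients
    refine ⟨fun k q => (if k = 0 then (0:ℝ) else deriv (c (k - 1)) q)
        - deriv U q * (((k : ℝ) + 1) * c (k + 1) q), ?_, ?_, ?_⟩
    · intro k
      have hUd : ContDiffOn ℝ (⊤ : ℕ∞) (deriv U) (Set.Ioo a b) := hU.deriv_of_isOpen hIoo (by simp)
      have h1 : ContDiffOn ℝ (⊤ : ℕ∞) (fun q => if k = 0 then (0:ℝ) else deriv (c (k - 1)) q)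
          (Set.Ioo a b) := by
        by_cases h0 : k = 0
        · simp [h0]; exact contDiffOn_const
        · simp only [if_neg h0]
          exact (hsm (k - 1)).deriv_of_isOpen hIoo (by simp)
      exact h1.sub (hUd.mul (contDiffOn_const.mul (hsm (k + 1))))
    · intro p q hq
      -- derivatives of g
      have hgp : deriv (fun p' => g p' q) p
          = ∑ k ∈ Finset.range (n + 3), c k q * ((k : ℝ) * p ^ (k - 1)) := by
        have he : (fun p' => g p' q) = fun p' => ∑ k ∈ Finset.range (n + 3), c k q * p' ^ k :=
          funext fun p' => hsum p' q hq
        rw [he]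
        exact (HasDerivAt.fun_sum fun k _ => (hasDerivAt_pow k p).const_mul (c k q)).deriv
      have hgq : deriv (fun q' => g p q') q
          = ∑ k ∈ Finset.range (n + 3), deriv (c k) q * p ^ k := by
        have hev : (fun q' => g p q') =ᶠ[nhds q]
            fun q' => ∑ k ∈ Finset.range (n + 3), c k q' * p ^ k := by
          filter_upwards [hIoo.mem_nhds hq] with x hx using hsum p x hx
        rw [hev.deriv_eq, deriv_fun_sum fun k _ => (diffAt (c k) (hsm k) q hq).mul_const _]
        exact Finset.sum_congr rfl fun k _ => deriv_mul_const (diffAt (c k) (hsm k) q hq) (p ^ k)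
      have hPB : poissonBracketIter C H (n + 1) p q
          = p * (∑ k ∈ Finset.range (n + 3), deriv (c k) q * p ^ k)
            - deriv U q * ∑ k ∈ Finset.range (n + 3), c k q * ((k : ℝ) * p ^ (k - 1)) := by
        show poissonBracket C g p q = _
        rw [poissonBracket, hCp, hCq, hgp, hgq]
      rw [hPB]
      have hid := sum_identity_pb (fun k => deriv (c k) q) (fun k => c k q) (deriv U q) p (n + 2)
      have hz1 : c (n + 2 + 2) q = 0 := by rw [hz _ (Or.inr (by omega))]; rfl
      have hz2 : c (n + 2 + 1) q = 0 := by rw [hz _ (Or.inr (by omega))]; rfl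
      rw [show n + 3 = n + 2 + 1 from rfl, show n + 1 + 3 = n + 2 + 2 from rfl]
      rw [hid, hz1, hz2]
      ring
    · intro k hk
      funext q
      match k with
      | 0 =>
        have hc1 : c 1 = 0 := by
          apply hz; left
          rcases hk with h | h <;> omega
        simp [hc1]
      | m + 1 =>
        have hcm : c m = 0 := by
          apply hz
          rcases hk with h | h
          · left; omega
          · right; omega
        have hcm2 : c (m + 2) = 0 := by
          apply hz
          rcases hk with h | h
          · left; omega
          · right; omega
        simp [hcm, hcm2, Pi.zero_def, show m + 1 + 1 = m + 2 from rfl,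
          show m + 1 - 1 = m from rfl]
end

section
/- Let I ⊆ ℝ be an open interval and α, V, U : I → ℝ smooth functions with U'(q) ≠ 0 for all q ∈ I. Define H(p,q) = α(q)·p² + V(q) and C(p,q) = p²/2 + U(q) on ℝ × I. If N ≥ 1 is an integer such that the iterated Poisson bracket {C,H}_{(2N+1)} vanishes identically on ℝ × I, then there exist real constants a₀, …, a_{N+1} such that {C,H}_{(2N)}(p,q) = Σ_{m=0}^{N+1} a_m·C(p,q)ᵐ for all (p,q) ∈ ℝ × I. -/
/-- A differentiable function with vanishing derivative on an open interval is constant there. -/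
lemma aux_const_on_Ioo {a b : ℝ} {f : ℝ → ℝ}
    (hdiff : ∀ q ∈ Set.Ioo a b, DifferentiableAt ℝ f q)
    (hd : ∀ q ∈ Set.Ioo a b, deriv f q = 0)
    {x y : ℝ} (hx : x ∈ Set.Ioo a b) (hy : y ∈ Set.Ioo a b) : f x = f y := by
  apply (convex_Ioo a b).is_const_of_fderivWithin_eq_zero
    (fun q hq => (hdiff q hq).differentiableWithinAt) _ hx hy
  intro q hq
  rw [fderivWithin_of_isOpen isOpen_Ioo hq]
  apply ContinuousLinearMap.ext_ring
  simp [fderiv_apply_one_eq_deriv, hd q hq]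

/-- A real polynomial that vanishes identically has zero coefficients. -/
lemma aux_coeffs_eq_zero {m : ℕ} {f : ℕ → ℝ}
    (h : ∀ p : ℝ, ∑ k ∈ Finset.range m, f k * p ^ k = 0) : ∀ k < m, f k = 0 := by
  intro k hk
  have hP : (∑ j ∈ Finset.range m, Polynomial.C (f j) * Polynomial.X ^ j : Polynomial ℝ) = 0 := by
    apply Polynomial.funext
    intro r
    simpa [Polynomial.eval_finset_sum] using h r
  have := congrArg (fun P : Polynomial ℝ => P.coeff k) hP
  simpa [Polynomial.finset_sum_coeff, Polynomial.coeff_C_mul, Polynomial.coeff_X_pow,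
    Finset.sum_ite_eq, Finset.mem_range, hk] using this

/-- Expansion of the Poisson bracket `{C, G}` when `G` is polynomial in `p` with smooth
coefficients. -/
lemma aux_expand_bracket (a b : ℝ) (U : ℝ → ℝ) (hU : ContDiffOn ℝ (⊤ : ℕ∞) U (Set.Ioo a b))
    (C : ℝ → ℝ → ℝ) (hC : ∀ p q : ℝ, C p q = p ^ 2 / 2 + U q)
    (m : ℕ) (c : ℕ → ℝ → ℝ) (hc : ∀ k, ContDiffOn ℝ (⊤ : ℕ∞) (c k) (Set.Ioo a b))
    (hz : ∀ k, m ≤ k → c k = 0)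
    (G : ℝ → ℝ → ℝ)
    (hG : ∀ p : ℝ, ∀ q ∈ Set.Ioo a b, G p q = ∑ k ∈ Finset.range m, c k q * p ^ k) :
    ∀ p : ℝ, ∀ q ∈ Set.Ioo a b, poissonBracket C G p q =
      ∑ k ∈ Finset.range (m + 1),
        ((if k = 0 then 0 else deriv (c (k - 1)) q)
          - deriv U q * (((k : ℝ) + 1) * c (k + 1) q)) * p ^ k := by
  intro p q hq
  have hUd : DifferentiableAt ℝ U q :=
    (hU.differentiableOn (by simp)).differentiableAt (isOpen_Ioo.mem_nhds hq)
  have hcd : ∀ k, DifferentiableAt ℝ (c k) q := fun k =>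
    ((hc k).differentiableOn (by simp)).differentiableAt (isOpen_Ioo.mem_nhds hq)
  have h1 : deriv (fun p' => C p' q) p = p := by
    have he : (fun p' => C p' q) = fun p' => p' ^ 2 / 2 + U q := funext fun p' => hC p' q
    rw [he, (((hasDerivAt_pow 2 p).div_const 2).add_const (U q)).deriv]
    norm_num
  have h2 : deriv (fun q' => C p q') q = deriv U q := by
    have he : (fun q' => C p q') = fun q' => p ^ 2 / 2 + U q' := funext fun q' => hC p q'
    rw [he, deriv_const_add]
  have h3 : deriv (fun p' => G p' q) p
      = ∑ k ∈ Finset.range m, c k q * ((k : ℝ) * p ^ (k - 1)) := by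
    have he : (fun p' => G p' q) = fun p' => ∑ k ∈ Finset.range m, c k q * p' ^ k :=
      funext fun p' => hG p' q hq
    rw [he]
    exact (HasDerivAt.fun_sum fun k _ => (hasDerivAt_pow k p).const_mul (c k q)).deriv
  have h4 : deriv (fun q' => G p q') q = ∑ k ∈ Finset.range m, deriv (c k) q * p ^ k := by
    have he : (fun q' => G p q') =ᶠ[nhds q] fun q' => ∑ k ∈ Finset.range m, c k q' * p ^ k := by
      filter_upwards [isOpen_Ioo.mem_nhds hq] with x hx
      exact hG p x hx
    rw [he.deriv_eq]
    exact (HasDerivAt.fun_sum fun k _ => ((hcd k).hasDerivAt.mul_const (p ^ k))).deriv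
  show deriv (fun p' => C p' q) p * deriv (fun q' => G p q') q -
      deriv (fun q' => C p q') q * deriv (fun p' => G p' q) p = _
  rw [h1, h2, h3, h4]
  have eq1 : p * ∑ k ∈ Finset.range m, deriv (c k) q * p ^ k
      = ∑ k ∈ Finset.range (m + 1), (if k = 0 then (0:ℝ) else deriv (c (k - 1)) q) * p ^ k := by
    rw [Finset.sum_range_succ', Finset.mul_sum]
    simp only [zero_mul, add_zero, Nat.add_sub_cancel,
      if_neg (Nat.succ_ne_zero _), if_pos rfl, if_true, ite_true]
    refine Finset.sum_congr rfl fun k _ => ?_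
    ring
  have eq2 : deriv U q * ∑ k ∈ Finset.range m, c k q * ((k : ℝ) * p ^ (k - 1))
      = ∑ k ∈ Finset.range (m + 1), deriv U q * (((k : ℝ) + 1) * c (k + 1) q) * p ^ k := by
    have hext : ∑ k ∈ Finset.range m, c k q * ((k : ℝ) * p ^ (k - 1))
        = ∑ k ∈ Finset.range (m + 2), c k q * ((k : ℝ) * p ^ (k - 1)) := by
      apply Finset.sum_subset
      · exact Finset.range_subset_range.2 (by omega)
      · intro k _ hk
        have : c k = 0 := hz k (by simp only [Finset.mem_range] at hk; omega)
        simp [this]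
    rw [hext, Finset.sum_range_succ' _ (m + 1)]
    simp only [Nat.cast_zero, zero_mul, mul_zero, add_zero, Nat.add_sub_cancel,
      Finset.mul_sum]
    refine Finset.sum_congr rfl fun k _ => ?_
    push_cast
    ring
  rw [eq1, eq2, ← Finset.sum_sub_distrib]
  refine Finset.sum_congr rfl fun k _ => ?_
  ring

/-- Structure of the iterated Poisson brackets: polynomial in `p` of degree `n+2`,
with smooth coefficients and parity matching `n`. -/
lemma aux_struct (a b : ℝ) (α V U : ℝ → ℝ)
    (hα : ContDiffOn ℝ (⊤ : ℕ∞) α (Set.Ioo a b))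
    (hV : ContDiffOn ℝ (⊤ : ℕ∞) V (Set.Ioo a b))
    (hU : ContDiffOn ℝ (⊤ : ℕ∞) U (Set.Ioo a b))
    (H C : ℝ → ℝ → ℝ)
    (hH : ∀ p q : ℝ, H p q = α q * p ^ 2 + V q)
    (hC : ∀ p q : ℝ, C p q = p ^ 2 / 2 + U q) :
    ∀ n : ℕ, ∃ c : ℕ → ℝ → ℝ,
      (∀ k, ContDiffOn ℝ (⊤ : ℕ∞) (c k) (Set.Ioo a b)) ∧
      (∀ k, n + 3 ≤ k → c k = 0) ∧
      (∀ k, (n + k) % 2 = 1 → c k = 0) ∧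
      (∀ p : ℝ, ∀ q ∈ Set.Ioo a b,
        poissonBracketIter C H n p q = ∑ k ∈ Finset.range (n + 3), c k q * p ^ k) := by
  intro n
  induction n with
  | zero =>
    refine ⟨fun k => if k = 0 then V else if k = 2 then α else 0, ?_, ?_, ?_, ?_⟩
    · intro k
      dsimp only
      split_ifs
      · exact hV
      · exact hα
      · exact contDiffOn_const
    · intro k hk
      have h0 : k ≠ 0 := by omega
      have h2 : k ≠ 2 := by omega
      simp [h0, h2]
    · intro k hk
      have h0 : k ≠ 0 := by omega
      have h2 : k ≠ 2 := by omega
      simp [h0, h2]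
    · intro p q hq
      show H p q = _
      rw [hH]
      rw [Finset.sum_range_succ, Finset.sum_range_succ, Finset.sum_range_one]
      norm_num
      ring
  | succ n ih =>
    obtain ⟨c, hsm, hz, hpar, hform⟩ := ih
    refine ⟨fun k q => (if k = 0 then 0 else deriv (c (k - 1)) q)
      - deriv U q * (((k : ℝ) + 1) * c (k + 1) q), ?_, ?_, ?_, ?_⟩
    · intro k
      dsimp only
      have hUK : ContDiffOn ℝ (⊤ : ℕ∞) (fun q => deriv U q * (((k : ℝ) + 1) * c (k + 1) q))
          (Set.Ioo a b) :=
        (hU.deriv_of_isOpen isOpen_Ioo (by simp)).mul (contDiffOn_const.mul (hsm (k + 1)))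
      have hI : ContDiffOn ℝ (⊤ : ℕ∞) (fun q => (if k = 0 then (0:ℝ) else deriv (c (k - 1)) q))
          (Set.Ioo a b) := by
        by_cases h : k = 0
        · simp only [if_pos h]; exact contDiffOn_const
        · simp only [if_neg h]; exact (hsm (k - 1)).deriv_of_isOpen isOpen_Ioo (by simp)
      exact hI.sub hUK
    · intro k hk
      funext q
      have h0 : k ≠ 0 := by omega
      have h1 : c (k - 1) = 0 := hz _ (by omega)
      have h2 : c (k + 1) = 0 := hz _ (by omega)
      simp [h0, h1, h2, show (0 : ℝ → ℝ) = fun _ => (0:ℝ) from rfl]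
    · intro k hk
      funext q
      rcases k with _ | k
      · have h1 : c 1 = 0 := hpar 1 (by omega)
        simp [h1]
      · have h1 : c k = 0 := hpar k (by omega)
        have h2 : c (k + 2) = 0 := hpar (k + 2) (by omega)
        simp [h1, h2, show (0 : ℝ → ℝ) = fun _ => (0:ℝ) from rfl]
    · intro p q hq
      have hexp := aux_expand_bracket a b U hU C hC (n + 3) c hsm hz _ hform p q hq
      show poissonBracket C (poissonBracketIter C H n) p q = _
      rw [hexp]

/-- Coefficient families satisfying the recursion `c_j' = (2j+2) U' c_{j+1}` with constant top
coefficient sum to a polynomial in `p²/2 + U`. -/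
lemma aux_polyC (a b : ℝ) (hab : a < b) (U : ℝ → ℝ) (hU : ContDiffOn ℝ (⊤ : ℕ∞) U (Set.Ioo a b)) :
    ∀ (M : ℕ) (bc : ℕ → ℝ → ℝ),
      (∀ j, ∀ q ∈ Set.Ioo a b, DifferentiableAt ℝ (bc j) q) →
      (∀ j < M, ∀ q ∈ Set.Ioo a b,
        deriv (bc j) q = deriv U q * ((2 * (j : ℝ) + 2) * bc (j + 1) q)) →
      (∀ q ∈ Set.Ioo a b, deriv (bc M) q = 0) →
      ∃ A : ℕ → ℝ, ∀ p : ℝ, ∀ q ∈ Set.Ioo a b,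
        ∑ j ∈ Finset.range (M + 1), bc j q * p ^ (2 * j) =
        ∑ m ∈ Finset.range (M + 1), A m * (p ^ 2 / 2 + U q) ^ m := by
  have hq₀ : (a + b) / 2 ∈ Set.Ioo a b := by constructor <;> linarith
  set q₀ := (a + b) / 2
  intro M
  induction M with
  | zero =>
    intro bc hd _ htop
    refine ⟨fun _ => bc 0 q₀, ?_⟩
    intro p q hq
    simp only [zero_add, Finset.sum_range_one, Nat.mul_zero, pow_zero, mul_one]
    exact aux_const_on_Ioo (hd 0) htop hq hq₀
  | succ M ih =>
    intro bc hd hrel htop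
    have hUd : ∀ q ∈ Set.Ioo a b, DifferentiableAt ℝ U q := fun q hq =>
      (hU.differentiableOn (by simp)).differentiableAt (isOpen_Ioo.mem_nhds hq)
    have hk : ∀ q ∈ Set.Ioo a b, bc (M + 1) q = bc (M + 1) q₀ := fun q hq =>
      aux_const_on_Ioo (hd (M + 1)) htop hq hq₀
    set k : ℝ := bc (M + 1) q₀ with hkdef
    set aM : ℝ := k * 2 ^ (M + 1) with haM
    set bc' : ℕ → ℝ → ℝ := fun j q =>
      bc j q - aM * (((M + 1).choose j : ℝ) * U q ^ (M + 1 - j)) / 2 ^ j with hbc'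
    have hd' : ∀ j, ∀ q ∈ Set.Ioo a b, DifferentiableAt ℝ (bc' j) q := by
      intro j q hq
      exact (hd j q hq).sub (((((hUd q hq).pow (M + 1 - j)).const_mul
        (((M + 1).choose j : ℝ))).const_mul aM).div_const (2 ^ j))
    have hderiv' : ∀ j, ∀ q ∈ Set.Ioo a b, deriv (bc' j) q
        = deriv (bc j) q - aM * (((M + 1).choose j : ℝ) *
          (((M + 1 - j : ℕ) : ℝ) * U q ^ (M + 1 - j - 1) * deriv U q)) / 2 ^ j := by
      intro j q hq
      have h1 : HasDerivAt (fun q => U q ^ (M + 1 - j))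
          (((M + 1 - j : ℕ) : ℝ) * U q ^ (M + 1 - j - 1) * deriv U q) q :=
        ((hUd q hq).hasDerivAt).pow _
      exact ((hd j q hq).hasDerivAt.sub
        (((h1.const_mul (((M + 1).choose j : ℝ))).const_mul aM).div_const (2 ^ j))).deriv
    have hrel' : ∀ j < M, ∀ q ∈ Set.Ioo a b,
        deriv (bc' j) q = deriv U q * ((2 * (j : ℝ) + 2) * bc' (j + 1) q) := by
      intro j hj q hq
      rw [hderiv' j q hq, hrel j (by omega) q hq]
      have he1 : M + 1 - j - 1 = M - j := by omega
      have he2 : M + 1 - (j + 1) = M - j := by omega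
      have key : (((M + 1).choose (j + 1) : ℕ) : ℝ) * ((j : ℝ) + 1)
          = (((M + 1).choose j : ℕ) : ℝ) * ((M + 1 - j : ℕ) : ℝ) := by
        exact_mod_cast Nat.choose_succ_right_eq (M + 1) j
      simp only [hbc', he1, he2]
      linear_combination (aM * U q ^ (M - j) * deriv U q / 2 ^ j) * key
    have htop' : ∀ q ∈ Set.Ioo a b, deriv (bc' M) q = 0 := by
      intro q hq
      rw [hderiv' M q hq, hrel M (by omega) q hq, hk q hq]
      rw [show M + 1 - M - 1 = 0 from by omega, show M + 1 - M = 1 from by omega,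
        Nat.choose_succ_self_right, haM]
      have h2M : (2:ℝ) ^ M ≠ 0 := by positivity
      rw [pow_succ]
      push_cast
      field_simp
      ring
    obtain ⟨A', hA'⟩ := ih bc' hd' hrel' htop'
    refine ⟨fun m => if m = M + 1 then aM else A' m, ?_⟩
    intro p q hq
    have hsplit : ∑ j ∈ Finset.range (M + 2), bc j q * p ^ (2 * j)
        = (∑ j ∈ Finset.range (M + 2), bc' j q * p ^ (2 * j))
          + ∑ j ∈ Finset.range (M + 2),
              aM * (((M + 1).choose j : ℝ) * U q ^ (M + 1 - j)) / 2 ^ j * p ^ (2 * j) := by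
      rw [← Finset.sum_add_distrib]
      refine Finset.sum_congr rfl fun j _ => ?_
      simp only [hbc']
      ring
    have hbin : ∑ j ∈ Finset.range (M + 2),
        aM * (((M + 1).choose j : ℝ) * U q ^ (M + 1 - j)) / 2 ^ j * p ^ (2 * j)
        = aM * (p ^ 2 / 2 + U q) ^ (M + 1) := by
      rw [add_pow, Finset.mul_sum]
      refine Finset.sum_congr rfl fun j hj => ?_
      rw [div_pow, pow_mul]
      have h2j : (2:ℝ) ^ j ≠ 0 := by positivity
      field_simp
    have hlast : bc' (M + 1) q = 0 := by
      simp only [hbc', Nat.choose_self, Nat.sub_self, pow_zero, Nat.cast_one, one_mul, mul_one]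
      rw [hk q hq, haM]
      have h2M : (2:ℝ) ^ (M + 1) ≠ 0 := by positivity
      field_simp
      ring
    calc ∑ j ∈ Finset.range (M + 2), bc j q * p ^ (2 * j)
        = (∑ j ∈ Finset.range (M + 1), bc' j q * p ^ (2 * j))
          + aM * (p ^ 2 / 2 + U q) ^ (M + 1) := by
          rw [hsplit, hbin, Finset.sum_range_succ, hlast, zero_mul, add_zero]
      _ = (∑ m ∈ Finset.range (M + 1), A' m * (p ^ 2 / 2 + U q) ^ m)
          + aM * (p ^ 2 / 2 + U q) ^ (M + 1) := by rw [hA' p q hq]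
      _ = ∑ m ∈ Finset.range (M + 2),
            (if m = M + 1 then aM else A' m) * (p ^ 2 / 2 + U q) ^ m := by
          have hfinal : ∑ m ∈ Finset.range (M + 2),
              (if m = M + 1 then aM else A' m) * (p ^ 2 / 2 + U q) ^ m
              = (∑ m ∈ Finset.range (M + 1), A' m * (p ^ 2 / 2 + U q) ^ m)
                + aM * (p ^ 2 / 2 + U q) ^ (M + 1) := by
            rw [Finset.sum_range_succ]
            congr 1
            · refine Finset.sum_congr rfl fun m hm => ?_
              have hne : m ≠ M + 1 := by simp only [Finset.mem_range] at hm; omega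
              rw [if_neg hne]
            · rw [if_pos rfl]
          rw [hfinal]

/-- Summing only over the even indices when odd terms vanish. -/
lemma aux_even_sum (m : ℕ) (g : ℕ → ℝ) (hodd : ∀ k, k % 2 = 1 → g k = 0) :
    ∑ k ∈ Finset.range (2 * m + 1), g k = ∑ j ∈ Finset.range (m + 1), g (2 * j) := by
  induction m with
  | zero => simp
  | succ m ih =>
    rw [show 2 * (m + 1) + 1 = (2 * m + 1) + 1 + 1 from by omega, Finset.sum_range_succ,
      Finset.sum_range_succ, ih, hodd (2 * m + 1) (by omega), add_zero,
      Finset.sum_range_succ, show 2 * m + 1 + 1 = 2 * (m + 1) from by omega,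
      Finset.sum_range_succ _ (m + 1), Finset.sum_range_succ _ m]

/-- If `{C,H}_{(2N+1)} = 0`, then `{C,H}_{(2N)}` is a polynomial of degree at most
`N+1` in the complexifier `C`. -/
theorem vanishing_odd_bracket_implies_polynomial_in_C
    (a b : ℝ) (hab : a < b)
    (α V U : ℝ → ℝ)
    (hα : ContDiffOn ℝ (⊤ : ℕ∞) α (Set.Ioo a b))
    (hV : ContDiffOn ℝ (⊤ : ℕ∞) V (Set.Ioo a b))
    (hU : ContDiffOn ℝ (⊤ : ℕ∞) U (Set.Ioo a b))
    (hU' : ∀ q ∈ Set.Ioo a b, deriv U q ≠ 0)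
    (H C : ℝ → ℝ → ℝ)
    (hH : ∀ p q : ℝ, H p q = α q * p ^ 2 + V q)
    (hC : ∀ p q : ℝ, C p q = p ^ 2 / 2 + U q)
    (N : ℕ) (hN : 1 ≤ N)
    (hvan : ∀ p : ℝ, ∀ q ∈ Set.Ioo a b, poissonBracketIter C H (2 * N + 1) p q = 0) :
    ∃ A : ℕ → ℝ, ∀ p : ℝ, ∀ q ∈ Set.Ioo a b,
      poissonBracketIter C H (2 * N) p q =
        ∑ m ∈ Finset.range (N + 2), A m * C p q ^ m := by
  obtain ⟨c, hsm, hz, hpar, hform⟩ :=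
    aux_struct a b α V U hα hV hU H C hH hC (2 * N)
  have hder := aux_expand_bracket a b U hU C hC (2 * N + 3) c hsm hz _ hform
  have hvanish : ∀ q ∈ Set.Ioo a b, ∀ k < 2 * N + 3 + 1,
      (if k = 0 then (0:ℝ) else deriv (c (k - 1)) q)
        - deriv U q * (((k : ℝ) + 1) * c (k + 1) q) = 0 := by
    intro q hq
    apply aux_coeffs_eq_zero
    intro p
    rw [← hder p q hq]
    have h0 : poissonBracketIter C H (2 * N + 1) p q
        = poissonBracket C (poissonBracketIter C H (2 * N)) p q := rfl
    rw [← h0]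
    exact hvan p q hq
  have hbcd : ∀ j, ∀ q ∈ Set.Ioo a b, DifferentiableAt ℝ (c (2 * j)) q := fun j q hq =>
    ((hsm (2 * j)).differentiableOn (by simp)).differentiableAt (isOpen_Ioo.mem_nhds hq)
  have hrel : ∀ j < N + 1, ∀ q ∈ Set.Ioo a b,
      deriv (c (2 * j)) q = deriv U q * ((2 * (j : ℝ) + 2) * c (2 * (j + 1)) q) := by
    intro j hj q hq
    have := hvanish q hq (2 * j + 1) (by omega)
    have h0 : (2 * j + 1 : ℕ) ≠ 0 := by omega
    rw [if_neg h0] at this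
    have h1 : 2 * j + 1 - 1 = 2 * j := by omega
    have h2 : 2 * j + 1 + 1 = 2 * (j + 1) := by omega
    rw [h1, h2] at this
    have h3 : deriv (c (2 * j)) q = deriv U q * ((((2 * j + 1 : ℕ) : ℝ) + 1) * c (2 * (j + 1)) q) := by
      linarith [this]
    rw [h3]
    push_cast
    ring
  have htop : ∀ q ∈ Set.Ioo a b, deriv (c (2 * (N + 1))) q = 0 := by
    intro q hq
    have := hvanish q hq (2 * N + 3) (by omega)
    have h0 : (2 * N + 3 : ℕ) ≠ 0 := by omega
    rw [if_neg h0] at this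
    have h1 : 2 * N + 3 - 1 = 2 * (N + 1) := by omega
    have h2 : c (2 * N + 3 + 1) = 0 := hz _ (by omega)
    rw [h1, h2] at this
    simpa using this
  obtain ⟨A, hA⟩ := aux_polyC a b hab U hU (N + 1) (fun j => c (2 * j)) hbcd hrel htop
  refine ⟨A, ?_⟩
  intro p q hq
  rw [hform p q hq, hC]
  have heven : ∑ k ∈ Finset.range (2 * N + 3), c k q * p ^ k
      = ∑ j ∈ Finset.range (N + 2), c (2 * j) q * p ^ (2 * j) := by
    have h1 : 2 * N + 3 = 2 * (N + 1) + 1 := by omega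
    rw [h1]
    exact aux_even_sum (N + 1) (fun k => c k q * p ^ k)
      (fun k hk => by have h := hpar k (by omega); simp [h])
  rw [heven]
  exact hA p q hq
end

section
/- Let ω > 0 and λ ∈ ℝ. On {(p,q) ∈ ℝ² : q ≠ 0} define the real-valued radial-oscillator Hamiltonian H(p,q) = p²/2 + ω²q²/2 + λ·q⁻² and the complex-valued function Z(p,q) = (q − i·p/ω)² − (2λ/ω²)·q⁻² (the square of the complexified coordinate z = e^{−iL_C}q). Then, with the Poisson bracket extended ℂ-linearly, {H, Z}(p,q) = 2iω·Z(p,q) for all (p,q) with q ≠ 0; i.e. the classical evolution of Z is a pure rotation by frequency 2ω, depending on Z alone and not on its complex conjugate. -/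
/-- Poisson bracket of a real-valued and a complex-valued function on ℝ² with
canonical coordinates (p,q), extended ℂ-linearly:
`{f,g} = (∂f/∂p)(∂g/∂q) − (∂f/∂q)(∂g/∂p)`. -/
noncomputable def poissonBracketRC (f : ℝ → ℝ → ℝ) (g : ℝ → ℝ → ℂ) : ℝ → ℝ → ℂ :=
  fun p q =>
    (deriv (fun p' => f p' q) p : ℂ) * deriv (fun q' => g p q') q -
    (deriv (fun q' => f p q') q : ℂ) * deriv (fun p' => g p' q) p

/-- For the radial oscillator, the square `Z = z²` of the complexified coordinate
evolves classically as a pure rotation: `{H,Z} = 2iω·Z`. -/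
theorem radial_oscillator_Z_evolves_by_rotation
    (ω lam : ℝ) (hω : 0 < ω)
    (H : ℝ → ℝ → ℝ) (Z : ℝ → ℝ → ℂ)
    (hH : ∀ p q : ℝ, H p q = p ^ 2 / 2 + ω ^ 2 * q ^ 2 / 2 + lam * (q ^ 2)⁻¹)
    (hZ : ∀ p q : ℝ, Z p q =
      ((q : ℂ) - Complex.I * p / ω) ^ 2 - (2 * lam / ω ^ 2 : ℝ) * ((q : ℂ) ^ 2)⁻¹) :
    ∀ p q : ℝ, q ≠ 0 →
      poissonBracketRC H Z p q = 2 * Complex.I * ω * Z p q := by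
  intro p q hq
  have hω' : (ω : ℂ) ≠ 0 := by exact_mod_cast hω.ne'
  have hqC : (q : ℂ) ≠ 0 := by exact_mod_cast hq
  set c : ℂ := ((2 * lam / ω ^ 2 : ℝ) : ℂ) with hc
  -- ∂H/∂p = p
  have h1 : HasDerivAt (fun p' : ℝ => H p' q) p p := by
    have : HasDerivAt (fun p' : ℝ => p' ^ 2 / 2 + (ω ^ 2 * q ^ 2 / 2 + lam * (q ^ 2)⁻¹))
        (2 * p ^ 1 / 2) p := ((hasDerivAt_pow 2 p).div_const 2).add_const _
    simpa [hH, add_assoc, pow_one, mul_div_assoc] using this.congr_deriv (by ring)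
  -- ∂H/∂q
  have h2 : HasDerivAt (fun q' : ℝ => H p q') (ω ^ 2 * q + lam * (-(2 * q) / (q ^ 2) ^ 2)) q := by
    have ha : HasDerivAt (fun q' : ℝ => p ^ 2 / 2 + ω ^ 2 * q' ^ 2 / 2)
        (ω ^ 2 * (2 * q ^ 1) / 2) q :=
      (((hasDerivAt_pow 2 q).const_mul (ω ^ 2)).div_const 2).const_add _
    have hb : HasDerivAt (fun q' : ℝ => lam * (q' ^ 2)⁻¹)
        (lam * (-(2 * q ^ 1) / (q ^ 2) ^ 2)) q :=
      ((hasDerivAt_pow 2 q).inv (pow_ne_zero 2 hq)).const_mul lam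
    have := ha.fun_add hb
    simp only [hH]
    refine this.congr_deriv ?_
    ring
  -- ∂Z/∂q
  have h3 : HasDerivAt (fun q' : ℝ => Z p q')
      (2 * ((q : ℂ) - Complex.I * p / ω) - c * (-(2 * q) / ((q : ℂ) ^ 2) ^ 2)) q := by
    have ha : HasDerivAt (fun w : ℂ => (w - Complex.I * p / ω) ^ 2 - c * (w ^ 2)⁻¹)
        (2 * ((q : ℂ) - Complex.I * p / ω) ^ 1 * (1 - 0) -
          c * (-(2 * (q : ℂ) ^ 1) / ((q : ℂ) ^ 2) ^ 2)) (q : ℂ) := by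
      refine ((((hasDerivAt_id _).sub_const _).fun_pow 2).fun_sub
        (((hasDerivAt_pow 2 (q : ℂ)).inv (pow_ne_zero 2 hqC)).const_mul c)).congr_deriv ?_ ; norm_num
    have := ha.comp_ofReal
    simp only [hZ]
    convert this using 1
    ring
  -- ∂Z/∂p
  have h4 : HasDerivAt (fun p' : ℝ => Z p' q)
      (2 * ((q : ℂ) - Complex.I * p / ω) * (-(Complex.I / ω))) p := by
    have ha : HasDerivAt (fun w : ℂ => ((q : ℂ) - Complex.I * w / ω) ^ 2 - c * ((q : ℂ) ^ 2)⁻¹)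
        (2 * ((q : ℂ) - Complex.I * p / ω) ^ 1 * (0 - Complex.I * 1 / ω)) (p : ℂ) := by
      refine (((((hasDerivAt_id (p:ℂ)).const_mul Complex.I).div_const ω |>.const_sub
        ((q:ℂ))).fun_pow 2).sub_const (c * ((q : ℂ) ^ 2)⁻¹)).congr_deriv ?_ ; norm_num
    have := ha.comp_ofReal
    simp only [hZ]
    convert this using 1
    ring
  rw [poissonBracketRC, h1.ofReal_comp.deriv, h2.ofReal_comp.deriv, h3.deriv, h4.deriv, hZ]
  rw [hc]
  push_cast
  have hI : Complex.I ^ 2 = -1 := Complex.I_sq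
  field_simp
  linear_combination ((p:ℂ) * (q:ℂ)^4 * (ω:ℂ)^2 + 2 * (p:ℂ) * (lam:ℂ) -
    (p:ℂ)^2 * (q:ℂ)^3 * (ω:ℂ) * Complex.I) * hI
end

section
/- Let ω > 0 and λ ∈ ℝ. On {(p,q) ∈ ℝ² : q ≠ 0} define H(p,q) = p²/2 + ω²q²/2 + λ·q⁻² and the complex-valued function Z(p,q) = (q − i·p/ω)² − (2λ/ω²)·q⁻². Then for all (p,q) with q ≠ 0, the squared modulus satisfies |Z(p,q)|² = (4/ω²)·( H(p,q)²/ω² − 2λ ); i.e. the modulus of the complexified coordinate z (with z² = Z) is |z|² = (2/ω)·√(H²/ω² − 2λ), a function of the energy alone. -/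
/-- For the radial oscillator, the squared modulus of `Z = z²` is a function of the
energy alone: `|Z|² = (4/ω²)(H²/ω² − 2λ)`. -/
theorem radial_oscillator_modulus_of_Z
    (ω lam : ℝ) (hω : 0 < ω)
    (H : ℝ → ℝ → ℝ) (Z : ℝ → ℝ → ℂ)
    (hH : ∀ p q : ℝ, H p q = p ^ 2 / 2 + ω ^ 2 * q ^ 2 / 2 + lam * (q ^ 2)⁻¹)
    (hZ : ∀ p q : ℝ, Z p q =
      ((q : ℂ) - Complex.I * p / ω) ^ 2 - (2 * lam / ω ^ 2 : ℝ) * ((q : ℂ) ^ 2)⁻¹) :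
    ∀ p q : ℝ, q ≠ 0 →
      ‖Z p q‖ ^ 2 = 4 / ω ^ 2 * ((H p q) ^ 2 / ω ^ 2 - 2 * lam) := by
  intro p q hq
  have hω0 : ω ≠ 0 := ne_of_gt hω
  have hre : Z p q = ((q ^ 2 - p ^ 2 / ω ^ 2 - 2 * lam / (ω ^ 2 * q ^ 2) : ℝ) : ℂ)
      + ((-(2 * p * q / ω) : ℝ) : ℂ) * Complex.I := by
    rw [hZ]
    push_cast
    linear_combination ((p : ℂ) ^ 2 / (ω : ℂ) ^ 2) * Complex.I_sq
  rw [hre, Complex.sq_norm, Complex.normSq_add_mul_I, hH p q]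
  field_simp
  ring
end

section
/- Let ω > 0 and λ ∈ ℝ. On {(p,q) ∈ ℝ² : q ≠ 0} define H(p,q) = p²/2 + ω²q²/2 + λ·q⁻² and the complex-valued function Z(p,q) = (q − i·p/ω)² − (2λ/ω²)·q⁻², with complex conjugate Z̄(p,q) = (q + i·p/ω)² − (2λ/ω²)·q⁻². Then, with the Poisson bracket extended ℂ-bilinearly, {Z̄, Z}(p,q) = (16i/ω³)·H(p,q) for all (p,q) with q ≠ 0; equivalently, in terms of z with z² = Z, {z̄, z} = (4i/ω³)·H/|z|², so that the rescaled functions L₃ = (ω/2)H, L₋ ∝ z², L₊ ∝ z̄² close the 𝔰𝔲(1,1) Poisson relations. -/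
/-- Poisson bracket of two complex-valued functions on ℝ² with canonical
coordinates (p,q), extended ℂ-bilinearly:
`{f,g} = (∂f/∂p)(∂g/∂q) − (∂f/∂q)(∂g/∂p)`. -/
noncomputable def poissonBracketCC (f g : ℝ → ℝ → ℂ) : ℝ → ℝ → ℂ :=
  fun p q =>
    deriv (fun p' => f p' q) p * deriv (fun q' => g p q') q -
    deriv (fun q' => f p q') q * deriv (fun p' => g p' q) p

/-- For the radial oscillator, `{Z̄, Z} = (16i/ω³)·H`: the rescaled functions
`L₃ = (ω/2)H`, `L₋ ∝ z²`, `L₊ ∝ z̄²` close the 𝔰𝔲(1,1) Poisson relations. -/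
theorem radial_oscillator_su11_bracket
    (ω lam : ℝ) (hω : 0 < ω)
    (H : ℝ → ℝ → ℝ) (Z Zbar : ℝ → ℝ → ℂ)
    (hH : ∀ p q : ℝ, H p q = p ^ 2 / 2 + ω ^ 2 * q ^ 2 / 2 + lam * (q ^ 2)⁻¹)
    (hZ : ∀ p q : ℝ, Z p q =
      ((q : ℂ) - Complex.I * p / ω) ^ 2 - (2 * lam / ω ^ 2 : ℝ) * ((q : ℂ) ^ 2)⁻¹)
    (hZbar : ∀ p q : ℝ, Zbar p q =
      ((q : ℂ) + Complex.I * p / ω) ^ 2 - (2 * lam / ω ^ 2 : ℝ) * ((q : ℂ) ^ 2)⁻¹) :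
    ∀ p q : ℝ, q ≠ 0 →
      poissonBracketCC Zbar Z p q = 16 * Complex.I / (ω : ℂ) ^ 3 * (H p q : ℂ) := by
  intro p q hq
  have hω0 : (ω : ℂ) ≠ 0 := by exact_mod_cast hω.ne'
  have hq0 : (q : ℂ) ≠ 0 := by exact_mod_cast hq
  set c : ℂ := ((2 * lam / ω ^ 2 : ℝ) : ℂ) with hc
  have hRp : HasDerivAt (fun x : ℝ => (x : ℂ)) 1 p := Complex.ofRealCLM.hasDerivAt
  have hRq : HasDerivAt (fun x : ℝ => (x : ℂ)) 1 q := Complex.ofRealCLM.hasDerivAt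
  -- ∂Zbar/∂p
  have dZbp : HasDerivAt (fun p' : ℝ => Zbar p' q)
      (2 * ((q : ℂ) + Complex.I * p / ω) * (Complex.I / ω)) p := by
    have key : (fun p' : ℝ => Zbar p' q) = fun p' : ℝ =>
        ((q : ℂ) + Complex.I * p' / ω) * ((q : ℂ) + Complex.I * p' / ω)
          - c * ((q : ℂ) ^ 2)⁻¹ := by
      funext x; rw [hZbar]; ring
    have h1 : HasDerivAt (fun p' : ℝ => (q : ℂ) + Complex.I * p' / ω)
        (Complex.I / ω) p := by
      simpa using (((hRp.const_mul Complex.I).div_const (ω : ℂ)).const_add (q : ℂ))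
    rw [key]
    convert (h1.mul h1).sub_const (c * ((q : ℂ) ^ 2)⁻¹) using 1
    case e'_4 => rfl
    case e'_8 => rfl
    case e'_9 => ring
  -- ∂Z/∂p
  have dZp : HasDerivAt (fun p' : ℝ => Z p' q)
      (2 * ((q : ℂ) - Complex.I * p / ω) * (-(Complex.I / ω))) p := by
    have key : (fun p' : ℝ => Z p' q) = fun p' : ℝ =>
        ((q : ℂ) - Complex.I * p' / ω) * ((q : ℂ) - Complex.I * p' / ω)
          - c * ((q : ℂ) ^ 2)⁻¹ := by
      funext x; rw [hZ]; ring
    have h1 : HasDerivAt (fun p' : ℝ => (q : ℂ) - Complex.I * p' / ω)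
        (-(Complex.I / ω)) p := by
      simpa using (((hRp.const_mul Complex.I).div_const (ω : ℂ)).const_sub (q : ℂ))
    rw [key]
    convert (h1.mul h1).sub_const (c * ((q : ℂ) ^ 2)⁻¹) using 1
    case e'_4 => rfl
    case e'_8 => rfl
    case e'_9 => ring
  -- derivative of q' ↦ ((q':ℂ)²)⁻¹
  have h3 : HasDerivAt (fun q' : ℝ => ((q' : ℂ)) * ((q' : ℂ))) (2 * q) q := by
    convert hRq.mul hRq using 1
    case e'_4 => rfl
    case e'_8 => rfl
    case e'_9 => ring
  have hg : HasDerivAt (fun z : ℂ => (z * z)⁻¹)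
      (-(2 * q) / ((q : ℂ) * q) ^ 2) (q : ℂ) := by
    have h4 : HasDerivAt (fun z : ℂ => z * z) (2 * q) (q : ℂ) := by
      have := (hasDerivAt_id ((q : ℂ))).mul (hasDerivAt_id ((q : ℂ)))
      simp only [id] at this
      convert this using 1
      case e'_4 => rfl
      case e'_5 => rfl
      case e'_8 => rfl
      case e'_9 => ring
    exact h4.inv (mul_ne_zero hq0 hq0)
  have hinv : HasDerivAt (fun q' : ℝ => (((q' : ℂ)) * ((q' : ℂ)))⁻¹)
      (-(2 * q) / ((q : ℂ) * q) ^ 2) q := hg.comp_ofReal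
  -- ∂Z/∂q
  have dZq : HasDerivAt (fun q' : ℝ => Z p q')
      (2 * ((q : ℂ) - Complex.I * p / ω) - c * (-(2 * q) / ((q : ℂ) * q) ^ 2)) q := by
    have key : (fun q' : ℝ => Z p q') = fun q' : ℝ =>
        ((q' : ℂ) - Complex.I * p / ω) * ((q' : ℂ) - Complex.I * p / ω)
          - c * (((q' : ℂ)) * ((q' : ℂ)))⁻¹ := by
      funext x; rw [hZ]; ring_nf
    have h1 : HasDerivAt (fun q' : ℝ => ((q' : ℂ)) - Complex.I * p / ω) 1 q :=
      hRq.sub_const _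
    rw [key]
    convert (h1.mul h1).sub (hinv.const_mul c) using 1
    case e'_4 => rfl
    case e'_8 => rfl
    case e'_9 => ring
  -- ∂Zbar/∂q
  have dZbq : HasDerivAt (fun q' : ℝ => Zbar p q')
      (2 * ((q : ℂ) + Complex.I * p / ω) - c * (-(2 * q) / ((q : ℂ) * q) ^ 2)) q := by
    have key : (fun q' : ℝ => Zbar p q') = fun q' : ℝ =>
        ((q' : ℂ) + Complex.I * p / ω) * ((q' : ℂ) + Complex.I * p / ω)
          - c * (((q' : ℂ)) * ((q' : ℂ)))⁻¹ := by
      funext x; rw [hZbar]; ring_nf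
    have h1 : HasDerivAt (fun q' : ℝ => ((q' : ℂ)) + Complex.I * p / ω) 1 q :=
      hRq.add_const _
    rw [key]
    convert (h1.mul h1).sub (hinv.const_mul c) using 1
    case e'_4 => rfl
    case e'_8 => rfl
    case e'_9 => ring
  show deriv (fun p' => Zbar p' q) p * deriv (fun q' => Z p q') q -
      deriv (fun q' => Zbar p q') q * deriv (fun p' => Z p' q) p = _
  rw [dZbp.deriv, dZq.deriv, dZbq.deriv, dZp.deriv, hH, hc]
  have hI2 : Complex.I * Complex.I = -1 := Complex.I_mul_I
  have hI3 : Complex.I ^ 3 = -Complex.I := by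
    rw [pow_succ, Complex.I_sq]; ring
  push_cast
  field_simp
  ring_nf
  rw [Complex.I_sq]
  field_simp
  ring
end

section
/- Let ω > 0, λ > 0, and let h ∈ ℝ with h² > 2λω²; set Ω := √(h²/ω² − 2λ) and let V(q) = ω²q²/2 + λ·q⁻² be the radial-oscillator potential. Then for every q > 0 with V(q) < h one has −1 < (ωq² − h/ω)/Ω < 1, and the angle function Θ(x) := (1/(2ω))·arcsin( (ωx² − h/ω)/Ω ) is differentiable at q with derivative Θ'(q) = ( 2(h − V(q)) )^{−1/2}; i.e. Θ is an antiderivative of the action-angle integrand 1/√(2(h − V(x))) of the radial oscillator. -/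
/-- The angle function `Θ(x) = (1/(2ω))·arcsin((ωx² − h/ω)/Ω)` is an antiderivative
of the action-angle integrand `1/√(2(h − V(x)))` of the radial oscillator. -/
theorem radial_oscillator_angle_antiderivative
    (ω lam h : ℝ) (hω : 0 < ω) (hlam : 0 < lam) (hh : 2 * lam * ω ^ 2 < h ^ 2)
    (Ω : ℝ) (hΩ : Ω = Real.sqrt (h ^ 2 / ω ^ 2 - 2 * lam))
    (V : ℝ → ℝ) (hV : ∀ q : ℝ, V q = ω ^ 2 * q ^ 2 / 2 + lam * (q ^ 2)⁻¹)
    (Θ : ℝ → ℝ)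
    (hΘ : ∀ x : ℝ, Θ x = 1 / (2 * ω) * Real.arcsin ((ω * x ^ 2 - h / ω) / Ω)) :
    ∀ q : ℝ, 0 < q → V q < h →
      (-1 < (ω * q ^ 2 - h / ω) / Ω ∧ (ω * q ^ 2 - h / ω) / Ω < 1) ∧
      HasDerivAt Θ ((Real.sqrt (2 * (h - V q)))⁻¹) q := by
  intro q hq hVq
  have hω2 : (0:ℝ) < ω ^ 2 := by positivity
  have hpos : 0 < h ^ 2 / ω ^ 2 - 2 * lam := by
    rw [sub_pos, lt_div_iff₀ hω2]; linarith
  have hΩpos : 0 < Ω := hΩ ▸ Real.sqrt_pos.mpr hpos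
  have hΩsq : Ω ^ 2 = h ^ 2 / ω ^ 2 - 2 * lam := by
    rw [hΩ, Real.sq_sqrt hpos.le]
  have hE : 0 < h - V q := by linarith
  have hE2 : 0 ≤ 2 * (h - V q) := by linarith
  set S := Real.sqrt (2 * (h - V q)) with hS
  have hSpos : 0 < S := Real.sqrt_pos.mpr (by linarith)
  have hSsq : S ^ 2 = 2 * (h - V q) := Real.sq_sqrt hE2
  have key : Ω ^ 2 - (ω * q ^ 2 - h / ω) ^ 2 = 2 * q ^ 2 * (h - V q) := by
    rw [hΩsq, hV]
    field_simp
    ring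
  set u : ℝ := (ω * q ^ 2 - h / ω) / Ω with hu
  have hu2 : u ^ 2 < 1 := by
    rw [hu, div_pow, div_lt_one (by positivity)]
    nlinarith [key, mul_pos (pow_pos hq 2) hE]
  have h1 : -1 < u := by nlinarith [sq_nonneg (u + 1)]
  have h2 : u < 1 := by nlinarith [sq_nonneg (u - 1)]
  refine ⟨⟨h1, h2⟩, ?_⟩
  have hinner : HasDerivAt (fun x : ℝ => (ω * x ^ 2 - h / ω) / Ω)
      (ω * (2 * q) / Ω) q := by
    exact (((hasDerivAt_pow 2 q).const_mul ω).sub_const (h / ω)).div_const Ω |>.congr_deriv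
      (by ring)
  have harcsin := (Real.hasDerivAt_arcsin (ne_of_gt h1) (ne_of_lt h2)).comp q hinner
  have hderiv := harcsin.const_mul (1 / (2 * ω))
  have hΘfun : Θ = fun x => 1 / (2 * ω) * Real.arcsin ((ω * x ^ 2 - h / ω) / Ω) :=
    funext hΘ
  rw [hΘfun]
  refine hderiv.congr_deriv ?_
  have hsqrt : Real.sqrt (1 - u ^ 2) = q * S / Ω := by
    rw [show 1 - u ^ 2 = (q * S / Ω) ^ 2 by
      rw [hu, div_pow, div_pow, mul_pow, hSsq,
        show (ω * q ^ 2 - h / ω) ^ 2 = Ω ^ 2 - 2 * q ^ 2 * (h - V q) by linarith]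
      field_simp
      ring]
    exact Real.sqrt_sq (by positivity)
  rw [hsqrt]
  field_simp
end

section
/- Let α ≥ 1 be real and n ∈ ℕ. Define the generalized Laguerre polynomial L(y) := Σ_{k=0}^{n} ((−1)ᵏ / (k!·(n−k)!)) · ( ∏_{j=k+1}^{n} (α/2 + j) ) · yᵏ and the function ψ(x) := e^{−x²/2} · x^{(α+1)/2} · L(x²) for x > 0. Then ψ is twice differentiable on (0,∞) and satisfies the radial-oscillator eigenvalue equation ψ''(x) = ( x² + (α² − 1)/(4x²) − 2·ε_n )·ψ(x) for all x > 0, where ε_n = 2n + 1 + α/2; i.e. the energy spectrum of the radial oscillator is discrete and equidistant, E_n = ℏω(2n + 1 + α/2). -/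
private noncomputable def lagC (α : ℝ) (n k : ℕ) : ℝ :=
  (-1 : ℝ) ^ k / (k.factorial * (n - k).factorial) *
    ∏ j ∈ Finset.Icc (k + 1) n, (α / 2 + (j : ℝ))

private lemma lagC_rec (α : ℝ) (n k : ℕ) (hk : k < n) :
    lagC α n (k+1) * ((2*(k:ℝ)+2) * ((2*(k:ℝ)+2) + α)) + lagC α n k * (4*(n:ℝ) - 4*(k:ℝ)) = 0 := by
  obtain ⟨m, rfl⟩ : ∃ m, n = m + k + 1 := ⟨n - k - 1, by omega⟩
  simp only [lagC]
  rw [show k + 1 + 1 = k + 2 from by omega,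
      show m + k + 1 - (k+1) = m from by omega,
      show m + k + 1 - k = m + 1 from by omega,
      show Finset.Icc (k+1) (m+k+1) = insert (k+1) (Finset.Icc (k+2) (m+k+1)) from by
        ext j; simp only [Finset.mem_Icc, Finset.mem_insert]; omega,
      Finset.prod_insert (by simp only [Finset.mem_Icc]; omega),
      Nat.factorial_succ k, Nat.factorial_succ m]
  have h1 : (k.factorial : ℝ) ≠ 0 := Nat.cast_ne_zero.mpr (Nat.factorial_ne_zero k)
  have h2 : (m.factorial : ℝ) ≠ 0 := Nat.cast_ne_zero.mpr (Nat.factorial_ne_zero m)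
  have h3 : ((k:ℝ) + 1) ≠ 0 := by positivity
  have h4 : ((m:ℝ) + 1) ≠ 0 := by positivity
  push_cast
  field_simp
  ring

private noncomputable def gg (α : ℝ) (n : ℕ) (x : ℝ) : ℝ :=
  ∑ k ∈ Finset.range (n + 1), lagC α n k * x ^ (2 * k)

private noncomputable def gg1 (α : ℝ) (n : ℕ) (x : ℝ) : ℝ :=
  ∑ k ∈ Finset.range (n + 1), lagC α n k * (((2 * k : ℕ) : ℝ) * x ^ (2 * k - 1))

private noncomputable def gg2 (α : ℝ) (n : ℕ) (x : ℝ) : ℝ :=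
  ∑ k ∈ Finset.range (n + 1),
    lagC α n k * (((2 * k : ℕ) : ℝ) * (((2 * k - 1 : ℕ) : ℝ) * x ^ (2 * k - 1 - 1)))

private lemma gg_deriv (α : ℝ) (n : ℕ) (x : ℝ) : HasDerivAt (gg α n) (gg1 α n x) x :=
  HasDerivAt.fun_sum fun k _ => (hasDerivAt_pow (2*k) x).const_mul (lagC α n k)

private lemma gg1_deriv (α : ℝ) (n : ℕ) (x : ℝ) : HasDerivAt (gg1 α n) (gg2 α n x) x :=
  HasDerivAt.fun_sum fun k _ =>
    (((hasDerivAt_pow (2*k-1) x).const_mul (((2 * k : ℕ) : ℝ))).const_mul (lagC α n k))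

private lemma key1 (α : ℝ) (n : ℕ) (x : ℝ) :
    x * gg1 α n x
      = ∑ k ∈ Finset.range (n+1), lagC α n k * (((2*k : ℕ) : ℝ) * x ^ (2*k)) := by
  simp only [gg1]
  rw [Finset.mul_sum]
  refine Finset.sum_congr rfl fun k _ => ?_
  match k with
  | 0 => norm_num
  | k+1 =>
    have h : x ^ (2*(k+1)) = x ^ (2*(k+1) - 1) * x := by
      rw [← pow_succ]; congr 1
    rw [h]; ring

private lemma key2 (α : ℝ) (n : ℕ) (x : ℝ) :
    x^2 * gg2 α n x
      = ∑ k ∈ Finset.range (n+1),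
          lagC α n k * (((2*k : ℕ) : ℝ) * (((2*k - 1 : ℕ) : ℝ) * x ^ (2*k))) := by
  simp only [gg2]
  rw [Finset.mul_sum]
  refine Finset.sum_congr rfl fun k _ => ?_
  match k with
  | 0 => norm_num
  | k+1 =>
    have h : x ^ (2*(k+1)) = x ^ (2*(k+1) - 1 - 1) * x^2 := by
      rw [← pow_add]; congr 1
    rw [h]; ring

private lemma gg_ode (α : ℝ) (n : ℕ) (x : ℝ) :
    x^2 * gg2 α n x + (α+1) * (x * gg1 α n x) - 2*x^2 * (x * gg1 α n x)
      + 4*(n:ℝ)*(x^2 * gg α n x) = 0 := by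
  have hxg : x^2 * gg α n x = ∑ k ∈ Finset.range (n+1), lagC α n k * x^(2*k+2) := by
    simp only [gg]; rw [Finset.mul_sum]
    exact Finset.sum_congr rfl fun k _ => by ring
  rw [key1, key2, hxg]
  have h2 : (∑ k ∈ Finset.range (n+1),
        lagC α n k * (((2*k:ℕ):ℝ) * ((((2*k-1:ℕ):ℝ) + (α+1)) * x^(2*k))))
      + ∑ k ∈ Finset.range (n+1),
        lagC α n k * ((4*(n:ℝ) - 2*((2*k:ℕ):ℝ)) * x^(2*k+2)) = 0 := by
    rw [Finset.sum_range_succ'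
        (fun k => lagC α n k * (((2*k:ℕ):ℝ) * ((((2*k-1:ℕ):ℝ) + (α+1)) * x^(2*k)))) n,
      Finset.sum_range_succ
        (fun k => lagC α n k * ((4*(n:ℝ) - 2*((2*k:ℕ):ℝ)) * x^(2*k+2))) n]
    have h0 : lagC α n 0 * (((2*0:ℕ):ℝ) * ((((2*0-1:ℕ):ℝ) + (α+1)) * x^(2*0))) = 0 := by
      norm_num
    have hn : lagC α n n * ((4*(n:ℝ) - 2*((2*n:ℕ):ℝ)) * x^(2*n+2)) = 0 := by
      push_cast; ring
    rw [h0, hn, add_zero, add_zero, ← Finset.sum_add_distrib]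
    refine Finset.sum_eq_zero fun k hk => ?_
    have hrec := lagC_rec α n k (Finset.mem_range.mp hk)
    rw [show (2*(k+1) - 1 : ℕ) = 2*k+1 from by omega]
    push_cast
    linear_combination x^(2*k+2) * hrec
  rw [← h2]
  simp only [Finset.mul_sum, ← Finset.sum_add_distrib, ← Finset.sum_sub_distrib]
  refine Finset.sum_congr rfl fun k _ => ?_
  ring

/-- The functions `ψ(x) = e^{−x²/2}·x^{(α+1)/2}·L_n^{(α/2)}(x²)` solve the
radial-oscillator eigenvalue equation
`ψ'' = (x² + (α²−1)/(4x²) − 2ε_n)·ψ` with equidistant eigenvalues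
`ε_n = 2n + 1 + α/2`. -/
theorem radial_oscillator_eigenfunctions
    (α : ℝ) (hα : 1 ≤ α) (n : ℕ)
    (L : ℝ → ℝ)
    (hL : ∀ y : ℝ, L y =
      ∑ k ∈ Finset.range (n + 1),
        (-1 : ℝ) ^ k / (k.factorial * (n - k).factorial) *
          (∏ j ∈ Finset.Icc (k + 1) n, (α / 2 + (j : ℝ))) * y ^ k)
    (ψ : ℝ → ℝ)
    (hψ : ∀ x : ℝ, ψ x = Real.exp (-x ^ 2 / 2) * x ^ ((α + 1) / 2) * L (x ^ 2)) :
    (∀ x ∈ Set.Ioi (0 : ℝ),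
      DifferentiableAt ℝ ψ x ∧ DifferentiableAt ℝ (deriv ψ) x) ∧
    (∀ x ∈ Set.Ioi (0 : ℝ),
      deriv (deriv ψ) x =
        (x ^ 2 + (α ^ 2 - 1) / (4 * x ^ 2) - 2 * (2 * (n : ℝ) + 1 + α / 2)) * ψ x) := by
  have hLgg : ∀ x : ℝ, L (x^2) = gg α n x := by
    intro x
    rw [hL]
    simp only [gg, lagC]
    exact Finset.sum_congr rfl fun k _ => by rw [pow_mul]
  have hψ' : ψ = fun y : ℝ => Real.exp (-y^2/2) * y ^ ((α+1)/2) * gg α n y := by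
    funext y; rw [hψ, hLgg]
  have hE : ∀ y : ℝ, HasDerivAt (fun t : ℝ => Real.exp (-t^2/2))
      (Real.exp (-y^2/2) * (-y)) y := by
    intro y
    have h : HasDerivAt (fun t : ℝ => -t^2/2) (-y) y := by
      have h2 := (hasDerivAt_pow 2 y).fun_neg.div_const 2
      refine h2.congr_deriv ?_
      push_cast
      ring
    exact h.exp
  have hμ : (1:ℝ) ≤ (α+1)/2 := by linarith
  have hP : ∀ y : ℝ, HasDerivAt (fun t : ℝ => t ^ ((α+1)/2))
      ((α+1)/2 * y ^ ((α+1)/2 - 1)) y :=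
    fun y => Real.hasDerivAt_rpow_const (Or.inr hμ)
  have hD1 : ∀ y : ℝ, HasDerivAt ψ
      ((Real.exp (-y^2/2) * (-y) * y ^ ((α+1)/2)
        + Real.exp (-y^2/2) * ((α+1)/2 * y ^ ((α+1)/2 - 1))) * gg α n y
        + Real.exp (-y^2/2) * y ^ ((α+1)/2) * gg1 α n y) y := by
    intro y
    rw [hψ']
    exact ((hE y).mul (hP y)).mul (gg_deriv α n y)
  have hdψ : deriv ψ = fun y : ℝ => (Real.exp (-y^2/2) * (-y) * y ^ ((α+1)/2)
        + Real.exp (-y^2/2) * ((α+1)/2 * y ^ ((α+1)/2 - 1))) * gg α n y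
        + Real.exp (-y^2/2) * y ^ ((α+1)/2) * gg1 α n y :=
    funext fun y => (hD1 y).deriv
  constructor
  · intro x hx
    have hx0 : x ≠ 0 := ne_of_gt hx
    refine ⟨(hD1 x).differentiableAt, ?_⟩
    rw [hdψ]
    exact ((((((hE x).mul ((hasDerivAt_id x).neg)).mul (hP x)).add
      ((hE x).mul ((Real.hasDerivAt_rpow_const (p := (α+1)/2 - 1) (Or.inl hx0)).const_mul ((α+1)/2)))).mul
      (gg_deriv α n x)).add (((hE x).mul (hP x)).mul (gg1_deriv α n x))).differentiableAt
  · intro x hx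
    have hx0 : x ≠ 0 := ne_of_gt hx
    rw [hdψ, hψ x, hLgg x]
    have hD2 := (((((hE x).mul ((hasDerivAt_id x).neg)).mul (hP x)).add
        ((hE x).mul ((Real.hasDerivAt_rpow_const (p := (α+1)/2 - 1) (Or.inl hx0)).const_mul ((α+1)/2)))).mul
        (gg_deriv α n x)).add (((hE x).mul (hP x)).mul (gg1_deriv α n x))
    refine hD2.deriv.trans ?_
    have e2 : x ^ ((α+1)/2 - 1) = x ^ ((α+1)/2 - 1 - 1) * x := by
      conv_lhs => rw [show (α+1)/2 - 1 = ((α+1)/2 - 1 - 1) + 1 from by ring]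
      rw [Real.rpow_add_one hx0]
    have e1 : x ^ ((α+1)/2) = x ^ ((α+1)/2 - 1 - 1) * x * x := by
      conv_lhs => rw [show (α+1)/2 = (((α+1)/2 - 1 - 1) + 1) + 1 from by ring]
      rw [Real.rpow_add_one hx0, Real.rpow_add_one hx0]
    have hx4 : (α^2 - 1)/(4*x^2) * x^2 = (α^2-1)/4 := by field_simp
    simp only [Pi.mul_apply, Pi.add_apply, Pi.neg_apply, id]
    rw [e1, e2]
    linear_combination (Real.exp (-x^2/2) * x ^ ((α+1)/2 - 1 - 1)) * gg_ode α n x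
      - (Real.exp (-x^2/2) * x ^ ((α+1)/2 - 1 - 1) * gg α n x) * hx4
end

section
/- Let α ≥ 1 be real and n ∈ ℕ, and let L(y) := Σ_{k=0}^{n} ((−1)ᵏ / (k!·(n−k)!)) · ( ∏_{j=k+1}^{n} (α/2 + j) ) · yᵏ be the generalized Laguerre polynomial L_n^{(α/2)}. Then ∫₀^∞ e^{−x²} · x^{α+1} · ( L(x²) )² dx = Γ(α/2 + n + 1) / (2·n!), where Γ is the Gamma function; i.e. the radial-oscillator eigenfunctions ψ_n(x) = √(2·n!/Γ(α/2 + 1 + n)) · e^{−x²/2} · x^{(α+1)/2} · L_n^{(α/2)}(x²) are normalized in L²((0,∞), dx). -/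
open MeasureTheory Finset

lemma alt_sum_succ (n : ℕ) (q : ℕ → ℝ) :
    ∑ l ∈ range (n + 2), (-1 : ℝ) ^ l * (n + 1).choose l * q l
      = ∑ l ∈ range (n + 1), (-1 : ℝ) ^ l * n.choose l * (q l - q (l + 1)) := by
  rw [Finset.sum_range_succ' (fun l => (-1 : ℝ) ^ l * (n + 1).choose l * q l) (n+1)]
  have h1 : ∀ l, ((n + 1).choose (l+1) : ℝ) = n.choose l + n.choose (l+1) := by
    intro l; exact_mod_cast congrArg (Nat.cast (R := ℝ)) (Nat.choose_succ_succ n l)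
  have h2 : ∑ l ∈ range (n+1), (-1:ℝ)^(l+1) * (n.choose (l+1)) * q (l+1)
      = ∑ l ∈ range (n+1), (-1:ℝ)^l * n.choose l * q l - q 0 := by
    have h4 := Finset.sum_range_succ' (fun l => (-1 : ℝ) ^ l * (n).choose l * q l) (n+1)
    have h3 : ∑ l ∈ range (n+2), (-1:ℝ)^l * n.choose l * q l
        = ∑ l ∈ range (n+1), (-1:ℝ)^l * n.choose l * q l := by
      rw [Finset.sum_range_succ]
      simp [Nat.choose_succ_self]
    rw [h3] at h4
    simp only [pow_zero, Nat.choose_zero_right, Nat.cast_one, one_mul, mul_one] at h4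
    linarith [h4]
  have hsplit : ∑ l ∈ range (n+1), (-1:ℝ)^(l+1) * ((n + 1).choose (l+1)) * q (l+1)
      = (∑ l ∈ range (n+1), (-1:ℝ)^(l+1) * (n.choose l) * q (l+1))
        + ∑ l ∈ range (n+1), (-1:ℝ)^(l+1) * (n.choose (l+1)) * q (l+1) := by
    rw [← Finset.sum_add_distrib]
    refine Finset.sum_congr rfl fun l _ => ?_
    rw [h1]; ring
  have hsub : ∑ l ∈ range (n+1), (-1:ℝ)^l * n.choose l * (q l - q (l+1))
      = (∑ l ∈ range (n+1), (-1:ℝ)^l * n.choose l * q l)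
        - ∑ l ∈ range (n+1), (-1:ℝ)^l * n.choose l * q (l+1) := by
    rw [← Finset.sum_sub_distrib]
    exact Finset.sum_congr rfl fun l _ => by ring
  have hneg : ∑ l ∈ range (n+1), (-1:ℝ)^(l+1) * (n.choose l) * q (l+1)
      = - ∑ l ∈ range (n+1), (-1:ℝ)^l * n.choose l * q (l+1) := by
    rw [← Finset.sum_neg_distrib]
    exact Finset.sum_congr rfl fun l _ => by ring
  simp only [pow_zero, Nat.choose_zero_right, Nat.cast_one, one_mul]
  rw [hsplit, h2, hsub, hneg]; ring

noncomputable def Sfd (n k : ℕ) (β : ℝ) : ℝ :=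
  ∑ l ∈ range (n + 1), (-1 : ℝ) ^ l * n.choose l * ∏ i ∈ range k, (β + l + (i + 1))

lemma Sfd_rec (n k : ℕ) (β : ℝ) :
    Sfd (n + 1) (k + 1) β = -(k + 1) * Sfd n k (β + 1) := by
  unfold Sfd
  rw [show n + 1 + 1 = n + 2 from rfl,
    alt_sum_succ n (fun l => ∏ i ∈ range (k + 1), (β + l + (i + 1)))]
  rw [Finset.mul_sum]
  refine Finset.sum_congr rfl fun l _ => ?_
  have hd : (∏ i ∈ range (k + 1), (β + l + (i + 1)))
      - ∏ i ∈ range (k + 1), (β + (l + 1) + (i + 1))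
      = -(k + 1) * ∏ i ∈ range k, (β + 1 + l + (i + 1)) := by
    have e1 : ∏ i ∈ range (k + 1), (β + l + (i + 1))
        = (∏ i ∈ range k, (β + 1 + l + (i + 1))) * (β + l + 1) := by
      rw [Finset.prod_range_succ' (fun i => (β + l + (i + 1))) k]
      congr 1
      · exact Finset.prod_congr rfl fun i _ => by push_cast; ring
      · norm_num
    have e2 : ∏ i ∈ range (k + 1), (β + (l + 1) + (i + 1))
        = (∏ i ∈ range k, (β + 1 + l + (i + 1))) * (β + l + 1 + (k + 1)) := by
      rw [Finset.prod_range_succ]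
      congr 1
      · exact Finset.prod_congr rfl fun i _ => by push_cast; ring
      · push_cast; ring
    rw [e1, e2]; ring
  push_cast at hd ⊢
  rw [hd]; ring

lemma Sfd_zero (n k : ℕ) (β : ℝ) (h : k < n) : Sfd n k β = 0 := by
  induction n generalizing k β with
  | zero => omega
  | succ n ih =>
    match k with
    | 0 =>
      unfold Sfd
      have := alt_sum_succ n (fun _ => (1 : ℝ))
      simp only [sub_self, mul_zero, Finset.sum_const_zero] at this
      simpa using this
    | k + 1 =>
      rw [Sfd_rec, ih k (β + 1) (by omega), mul_zero]

lemma Sfd_diag (n : ℕ) (β : ℝ) : Sfd n n β = (-1 : ℝ) ^ n * n.factorial := by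
  induction n generalizing β with
  | zero => simp [Sfd]
  | succ n ih =>
    rw [Sfd_rec, ih (β + 1)]
    rw [Nat.factorial_succ]; push_cast; ring



lemma gamma_shift (γ : ℝ) (hγ : 0 < γ) (k : ℕ) :
    Real.Gamma (γ + k + 1) = Real.Gamma (γ + 1) * ∏ i ∈ range k, (γ + (i + 1)) := by
  induction k with
  | zero => simp
  | succ k ih =>
    have h1 : γ + (k + 1 : ℕ) + 1 = (γ + k + 1) + 1 := by push_cast; ring
    rw [h1, Real.Gamma_add_one (by positivity), ih, Finset.prod_range_succ]
    push_cast; ring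

lemma gamma_tail (β : ℝ) (hβ : 0 < β) (l n : ℕ) (h : l ≤ n) :
    Real.Gamma (β + l + 1) * ∏ j ∈ Icc (l + 1) n, (β + j) = Real.Gamma (β + n + 1) := by
  induction n, h using Nat.le_induction with
  | base => simp
  | succ n hln ih =>
    have hg : Real.Gamma (β + (n + 1 : ℕ) + 1) = (β + n + 1) * Real.Gamma (β + n + 1) := by
      rw [show β + (n + 1 : ℕ) + 1 = (β + n + 1) + 1 by push_cast; ring,
        Real.Gamma_add_one (by positivity)]
    rw [Finset.prod_Icc_succ_top (by omega), hg, ← ih]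
    push_cast; ring

lemma key_sum (β : ℝ) (hβ : 0 < β) (n : ℕ) :
    ∑ k ∈ range (n + 1), ∑ l ∈ range (n + 1),
      ((-1 : ℝ) ^ k / (k.factorial * (n - k).factorial) * ∏ j ∈ Icc (k + 1) n, (β + j)) *
        ((-1 : ℝ) ^ l / (l.factorial * (n - l).factorial) * ∏ j ∈ Icc (l + 1) n, (β + j)) *
        Real.Gamma (β + k + l + 1)
      = Real.Gamma (β + n + 1) / n.factorial := by
  have hfac : ∀ l : ℕ, l ≤ n → ((l.factorial : ℝ) * (n - l).factorial)⁻¹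
      = n.choose l / n.factorial := by
    intro l hl
    have := Nat.choose_mul_factorial_mul_factorial hl
    have h2 : (n.choose l : ℝ) * l.factorial * (n - l).factorial = n.factorial := by
      exact_mod_cast congrArg (Nat.cast (R := ℝ)) this
    have hl1 : (l.factorial : ℝ) ≠ 0 := by positivity
    have hl2 : ((n - l).factorial : ℝ) ≠ 0 := by positivity
    have hn : (n.factorial : ℝ) ≠ 0 := by positivity
    field_simp
    linarith [h2]
  have step1 : ∀ k ∈ range (n + 1),
      ∑ l ∈ range (n + 1),
        ((-1 : ℝ) ^ k / (k.factorial * (n - k).factorial) * ∏ j ∈ Icc (k + 1) n, (β + j)) *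
          ((-1 : ℝ) ^ l / (l.factorial * (n - l).factorial) * ∏ j ∈ Icc (l + 1) n, (β + j)) *
          Real.Gamma (β + k + l + 1)
      = ((-1 : ℝ) ^ k / (k.factorial * (n - k).factorial) * ∏ j ∈ Icc (k + 1) n, (β + j)) *
          (Real.Gamma (β + n + 1) / n.factorial) * Sfd n k β := by
    intro k _
    rw [Sfd, Finset.mul_sum]
    refine Finset.sum_congr rfl fun l hl => ?_
    have hln : l ≤ n := by simp at hl; omega
    have hg1 : Real.Gamma (β + k + l + 1) = Real.Gamma (β + l + 1)
        * ∏ i ∈ range k, (β + l + (i + 1)) := by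
      have := gamma_shift (β + l) (by positivity) k
      rw [show β + ↑k + ↑l + 1 = β + ↑l + ↑k + 1 by ring, this]
    have hg2 : Real.Gamma (β + l + 1) * ∏ j ∈ Icc (l + 1) n, (β + j)
        = Real.Gamma (β + n + 1) := gamma_tail β hβ l n hln
    rw [hg1]
    rw [div_eq_mul_inv ((-1:ℝ)^l), hfac l hln]
    calc ((-1:ℝ)^k / (k.factorial * (n-k).factorial) * ∏ j ∈ Icc (k+1) n, (β + j)) *
          ((-1:ℝ)^l * (n.choose l / n.factorial) * ∏ j ∈ Icc (l+1) n, (β + j)) *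
          (Real.Gamma (β + l + 1) * ∏ i ∈ range k, (β + l + (i + 1)))
        = ((-1:ℝ)^k / (k.factorial * (n-k).factorial) * ∏ j ∈ Icc (k+1) n, (β + j)) *
          ((-1:ℝ)^l * (n.choose l / n.factorial)) *
          (Real.Gamma (β + l + 1) * ∏ j ∈ Icc (l+1) n, (β + j)) *
          ∏ i ∈ range k, (β + l + (i + 1)) := by ring
      _ = _ := by rw [hg2]; ring
  rw [Finset.sum_congr rfl step1]
  rw [Finset.sum_eq_single_of_mem n (by simp)]
  · rw [Sfd_diag]
    simp only [Nat.sub_self, Nat.factorial_zero, Nat.cast_one, mul_one, Icc_self]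
    rw [show Icc (n + 1) n = ∅ by simp, Finset.prod_empty]
    have hn : (n.factorial : ℝ) ≠ 0 := by positivity
    field_simp
    ring_nf
    rw [show ((-1:ℝ)^(n*2)) = 1 by rw [mul_comm, pow_mul]; norm_num]
  · intro k hk hkn
    rw [Sfd_zero n k β (by simp at hk; omega), mul_zero]

/-- Normalization of the radial-oscillator eigenfunctions:
`∫₀^∞ e^{−x²}·x^{α+1}·(L_n^{(α/2)}(x²))² dx = Γ(α/2 + n + 1)/(2·n!)`. -/
theorem radial_oscillator_eigenfunctions_normalization
    (α : ℝ) (hα : 1 ≤ α) (n : ℕ)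
    (L : ℝ → ℝ)
    (hL : ∀ y : ℝ, L y =
      ∑ k ∈ Finset.range (n + 1),
        (-1 : ℝ) ^ k / (k.factorial * (n - k).factorial) *
          (∏ j ∈ Finset.Icc (k + 1) n, (α / 2 + (j : ℝ))) * y ^ k) :
    ∫ x in Set.Ioi (0 : ℝ), Real.exp (-x ^ 2) * x ^ (α + 1) * (L (x ^ 2)) ^ 2 =
      Real.Gamma (α / 2 + (n : ℝ) + 1) / (2 * n.factorial) := by
  have hβ : 0 < α / 2 := by linarith
  set c : ℕ → ℝ := fun k => (-1 : ℝ) ^ k / (k.factorial * (n - k).factorial) *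
      (∏ j ∈ Finset.Icc (k + 1) n, (α / 2 + (j : ℝ))) with hc
  set f : ℝ → ℝ := fun y => Real.exp (-y) * y ^ (α / 2) * (L y) ^ 2 with hf
  -- Step 1: substitution y = x^2
  have h0 : ∫ x in Set.Ioi (0 : ℝ), Real.exp (-x ^ 2) * x ^ (α + 1) * (L (x ^ 2)) ^ 2
      = ∫ x in Set.Ioi (0 : ℝ),
          (1 / 2 : ℝ) * ((|(2 : ℝ)| * x ^ ((2 : ℝ) - 1)) • f (x ^ (2 : ℝ))) := by
    refine setIntegral_congr_fun measurableSet_Ioi fun x hx => ?_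
    have hx0 : (0 : ℝ) < x := hx
    have hx2 : x ^ (2 : ℝ) = x ^ (2 : ℕ) := by
      rw [show (2 : ℝ) = ((2 : ℕ) : ℝ) by norm_num, Real.rpow_natCast]
    have hxa : (x ^ (2 : ℕ) : ℝ) ^ (α / 2) = x ^ α := by
      rw [← Real.rpow_natCast x 2, ← Real.rpow_mul hx0.le]
      norm_num
      congr 1
      ring
    have hx1 : x ^ ((2 : ℝ) - 1) = x := by norm_num
    have hxp : x ^ (α + 1) = x ^ α * x := by
      rw [Real.rpow_add hx0, Real.rpow_one]
    rw [hf]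
    simp only [smul_eq_mul, hx2, hxa, hx1, hxp]
    rw [abs_of_nonneg (by norm_num : (0:ℝ) ≤ (2:ℝ))]
    ring
  rw [h0, MeasureTheory.integral_const_mul, integral_comp_rpow_Ioi f two_ne_zero]
  -- Step 2: expand f as a finite sum on Ioi 0
  set g : ℕ × ℕ → ℝ → ℝ := fun p y =>
    (c p.1 * c p.2) * (Real.exp (-y) * y ^ (α / 2 + p.1 + p.2 + 1 - 1)) with hg
  have hexp : Set.EqOn f
      (fun y => ∑ p ∈ range (n + 1) ×ˢ range (n + 1), g p y) (Set.Ioi 0) := by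
    intro y hy
    have hy0 : (0 : ℝ) < y := hy
    simp only [hf, hg]
    rw [hL y, pow_two, Finset.sum_mul_sum, Finset.sum_product]
    rw [Finset.mul_sum]
    refine Finset.sum_congr rfl fun k hk => ?_
    rw [Finset.mul_sum]
    refine Finset.sum_congr rfl fun l hl => ?_
    have hpow : y ^ (α / 2) * (y ^ k * y ^ l) = y ^ (α / 2 + k + l + 1 - 1) := by
      rw [← pow_add, ← Real.rpow_natCast y (k + l), ← Real.rpow_add hy0]
      congr 1
      push_cast; ring
    calc Real.exp (-y) * y ^ (α / 2) * (c k * y ^ k * (c l * y ^ l))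
        = (c k * c l) * (Real.exp (-y) * (y ^ (α / 2) * (y ^ k * y ^ l))) := by ring
      _ = _ := by rw [hpow]
  rw [setIntegral_congr_fun measurableSet_Ioi hexp]
  have hintg : ∀ p ∈ range (n + 1) ×ˢ range (n + 1),
      IntegrableOn (g p) (Set.Ioi 0) := by
    intro p _
    have hs : 0 < α / 2 + (p.1 : ℝ) + p.2 + 1 := by positivity
    exact (Real.GammaIntegral_convergent hs).const_mul _
  rw [MeasureTheory.integral_finset_sum _ hintg]
  have heval : ∀ p ∈ range (n + 1) ×ˢ range (n + 1),
      ∫ y in Set.Ioi (0 : ℝ), g p y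
        = c p.1 * c p.2 * Real.Gamma (α / 2 + p.1 + p.2 + 1) := by
    intro p _
    have hs : 0 < α / 2 + (p.1 : ℝ) + p.2 + 1 := by positivity
    rw [hg]
    simp only
    rw [MeasureTheory.integral_const_mul, ← Real.Gamma_eq_integral hs]
  rw [Finset.sum_congr rfl heval, Finset.sum_product]
  have := key_sum (α / 2) hβ n
  simp only [hc]
  rw [show (∑ k ∈ range (n+1), ∑ l ∈ range (n+1),
      ((-1 : ℝ) ^ k / (k.factorial * (n - k).factorial) * ∏ j ∈ Icc (k + 1) n, (α/2 + j)) *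
        ((-1 : ℝ) ^ l / (l.factorial * (n - l).factorial) * ∏ j ∈ Icc (l + 1) n, (α/2 + j)) *
        Real.Gamma (α/2 + k + l + 1)) = Real.Gamma (α/2 + n + 1) / n.factorial from this]
  ring
end
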